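/- arXiv:1603.05380 — 5 statements merged into one kernel-verified Lean document; each statement's English description precedes it below -/
import Mathlib

section
/- For every integer p ≥ 2 and every X ∈ R^p one has the discrete Hardy–Littlewood–Sobolev inequality Σ_{1≤i≠j≤p} |X_i−X_j|^{1−m} ≤ p · Σ_{i=1}^{p−1} (X_{i+1}−X_i)^{1−m}. -/
open scoped BigOperators
noncomputable section

/-- Internal (diffusion) part: sum of (X_{i+1} - X_i)^(1-m) over consecutive gaps. -/
def gapSum (m : ℝ) (p : ℕ) (X : EuclideanSpace ℝ (Fin p)) : ℝ :=
  ∑ i : Fin p, if h : (i : ℕ) + 1 < p then (X ⟨(i : ℕ) + 1, h⟩ - X i) ^ (1 - m) else 0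

/-- Interaction part: sum of |X_i - X_j|^(1-m) over ordered pairs i ≠ j. -/
def pairSum (m : ℝ) (p : ℕ) (X : EuclideanSpace ℝ (Fin p)) : ℝ :=
  ∑ i : Fin p, ∑ j : Fin p, if i ≠ j then |X i - X j| ^ (1 - m) else 0

/-- The discrete free energy F^p_m. -/
def FF (m χ : ℝ) (p : ℕ) (X : EuclideanSpace ℝ (Fin p)) : ℝ :=
  (m - 1)⁻¹ * gapSum m p X - (χ / (m - 1)) * pairSum m p X

/-- Membership in R^p: strictly increasing with zero mean. -/
def memR (p : ℕ) (X : EuclideanSpace ℝ (Fin p)) : Prop :=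
  (StrictMono fun i => X i) ∧ ∑ i, X i = 0

/-- The critical constant C_p, with 1/C_p the sup of the HLS ratio. -/
def Cp (m : ℝ) (p : ℕ) : ℝ :=
  (sSup {r : ℝ | ∃ X : EuclideanSpace ℝ (Fin p), memR p X ∧
    r = pairSum m p X / gapSum m p X})⁻¹

/-- The functional F^p_{m,α} with confining quadratic potential. -/
def FFa (m χ α : ℝ) (p : ℕ) (X : EuclideanSpace ℝ (Fin p)) : ℝ :=
  FF m χ p X + α / 2 * ‖X‖ ^ 2

/-- H^N_{m+1}(Y) = |∇F^N_m(Y)|² − ((m−1) F^N_m(Y))². -/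
def Hfun (m χ : ℝ) (N : ℕ) (Y : EuclideanSpace ℝ (Fin N)) : ℝ :=
  ‖gradient (FF m χ N) Y‖ ^ 2 - ((m - 1) * FF m χ N Y) ^ 2

/-- X : [0,T) → R^N is a solution of the gradient flow of F^N_m. -/
def isGFlow (m χ : ℝ) (N : ℕ) (T : ℝ) (X : ℝ → EuclideanSpace ℝ (Fin N)) : Prop :=
  ∀ t ∈ Set.Ico (0 : ℝ) T, memR N (X t) ∧
    HasDerivWithinAt X (-(gradient (FF m χ N) (X t))) (Set.Ico (0 : ℝ) T) t

/-- The gap Y_{i+1} - Y_i (0 if i+1 is out of range). -/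
def gapAt (N : ℕ) (Y : EuclideanSpace ℝ (Fin N)) (i : ℕ) : ℝ :=
  if h : i + 1 < N then Y ⟨i + 1, h⟩ - Y ⟨i, Nat.lt_of_succ_lt h⟩ else 0

theorem stmt1 (m : ℝ) (hm : 1 < m) (p : ℕ) (hp : 2 ≤ p)
    (X : EuclideanSpace ℝ (Fin p)) (hX : memR p X) :
    pairSum m p X ≤ (p : ℝ) * gapSum m p X := by
  unfold pairSum gapSum
  obtain ⟨hmono, -⟩ := hX
  have hm' : 1 - m ≤ 0 := by linarith
  -- the gap power, ℕ-indexed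
  set g : ℕ → ℝ := fun k =>
    if h : k + 1 < p then (X ⟨k + 1, h⟩ - X ⟨k, Nat.lt_of_succ_lt h⟩) ^ (1 - m) else 0 with hgdef
  have hg_nonneg : ∀ k, 0 ≤ g k := by
    intro k
    simp only [hgdef]
    by_cases h : k + 1 < p
    · rw [dif_pos h]
      have hlt : X ⟨k, Nat.lt_of_succ_lt h⟩ < X ⟨k + 1, h⟩ := hmono (by simp [Fin.lt_def])
      exact Real.rpow_nonneg (by linarith) _
    · rw [dif_neg h]
  have hgap : (∑ i : Fin p, if h : (i : ℕ) + 1 < p then (X ⟨(i : ℕ) + 1, h⟩ - X i) ^ (1 - m) else 0)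
      = ∑ k ∈ Finset.range p, g k := by
    rw [← Fin.sum_univ_eq_sum_range g p]
  -- pointwise bound
  have key : ∀ i j : Fin p, (if i ≠ j then |X i - X j| ^ (1 - m) else 0) ≤
      (if (i : ℕ) < (j : ℕ) then g i else if (j : ℕ) < (i : ℕ) then g ((i : ℕ) - 1) else 0) := by
    intro i j
    rcases lt_trichotomy (i : ℕ) (j : ℕ) with hij | hij | hij
    · have hne : i ≠ j := by intro h; rw [h] at hij; exact lt_irrefl _ hij
      rw [if_pos hne, if_pos hij]
      have hip : (i : ℕ) + 1 < p := lt_of_le_of_lt hij j.isLt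
      have h1 : X i < X ⟨(i : ℕ) + 1, hip⟩ := hmono (by simp [Fin.lt_def])
      have h2 : X ⟨(i : ℕ) + 1, hip⟩ ≤ X j := by
        rcases eq_or_lt_of_le (Nat.succ_le_of_lt hij) with h | h
        · exact le_of_eq (congrArg X (Fin.ext h))
        · exact le_of_lt (hmono (show (⟨(i:ℕ)+1, hip⟩ : Fin p) < j from by simp [Fin.lt_def, h]))
      have habs : |X i - X j| = X j - X i := by
        rw [abs_sub_comm]; exact abs_of_pos (by linarith)
      rw [habs]
      simp only [hgdef, dif_pos hip, Fin.eta]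
      exact Real.rpow_le_rpow_of_nonpos (by linarith) (by linarith) hm'
    · simp [Fin.ext (hij : (i:ℕ) = (j:ℕ))]
    · have hne : i ≠ j := by intro h; rw [h] at hij; exact lt_irrefl _ hij
      rw [if_pos hne, if_neg (Nat.not_lt.mpr (le_of_lt hij)), if_pos hij]
      have hi1 : (i : ℕ) - 1 + 1 = (i : ℕ) := by omega
      have hip : (i : ℕ) - 1 + 1 < p := by rw [hi1]; exact i.isLt
      have hlt : ((i : ℕ) - 1) < p := Nat.lt_of_succ_lt hip
      have h1 : X ⟨(i : ℕ) - 1, hlt⟩ < X i := hmono (by simp [Fin.lt_def]; omega)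
      have h2 : X j ≤ X ⟨(i : ℕ) - 1, hlt⟩ := by
        rcases eq_or_lt_of_le (show (j : ℕ) ≤ (i : ℕ) - 1 by omega) with h | h
        · exact le_of_eq (congrArg X (Fin.ext h))
        · exact le_of_lt (hmono (show j < (⟨(i:ℕ)-1, hlt⟩ : Fin p) from by simp [Fin.lt_def, h]))
      have habs : |X i - X j| = X i - X j := abs_of_pos (by linarith)
      rw [habs]
      simp only [hgdef, dif_pos hip]
      have hXeq : X ⟨(i : ℕ) - 1 + 1, hip⟩ = X i := congrArg X (Fin.ext hi1)
      rw [hXeq]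
      exact Real.rpow_le_rpow_of_nonpos (by linarith) (by linarith) hm'
  -- bound the pair sum
  have step1 : (∑ i : Fin p, ∑ j : Fin p, if i ≠ j then |X i - X j| ^ (1 - m) else 0) ≤
      ∑ i ∈ Finset.range p, ((p - 1 - i : ℕ) * g i + (i : ℕ) * g (i - 1)) := by
    have inner : ∀ a : ℕ, a < p → ∀ c d : ℝ,
        (∑ j ∈ Finset.range p, if a < j then c else if j < a then d else 0)
          = (p - 1 - a : ℕ) * c + (a : ℕ) * d := by
      intro a ha c d
      rw [Finset.range_eq_Ico, ← Finset.sum_Ico_consecutive _ (Nat.zero_le a) (le_of_lt ha),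
        Finset.sum_eq_sum_Ico_succ_bot ha]
      have e1 : ∑ j ∈ Finset.Ico 0 a, (if a < j then c else if j < a then d else 0)
          = (a : ℕ) * d := by
        have hc : ∀ j ∈ Finset.Ico 0 a, (if a < j then c else if j < a then d else 0) = d := by
          intro j hj
          rw [Finset.mem_Ico] at hj
          rw [if_neg (show ¬(a < j) by omega), if_pos hj.2]
        rw [Finset.sum_congr rfl hc, Finset.sum_const, Nat.card_Ico, nsmul_eq_mul, Nat.sub_zero]
      have e2 : ∑ j ∈ Finset.Ico (a + 1) p, (if a < j then c else if j < a then d else 0)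
          = (p - 1 - a : ℕ) * c := by
        have hc : ∀ j ∈ Finset.Ico (a + 1) p, (if a < j then c else if j < a then d else 0) = c := by
          intro j hj
          rw [Finset.mem_Ico] at hj
          rw [if_pos (Nat.lt_of_succ_le hj.1)]
        rw [Finset.sum_congr rfl hc, Finset.sum_const, Nat.card_Ico, nsmul_eq_mul]
        congr 2
        omega
      rw [e1, e2, if_neg (lt_irrefl a), if_neg (lt_irrefl a)]
      ring
    calc (∑ i : Fin p, ∑ j : Fin p, if i ≠ j then |X i - X j| ^ (1 - m) else 0)
        ≤ ∑ i : Fin p, ∑ j : Fin p,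
            (if (i : ℕ) < (j : ℕ) then g i else if (j : ℕ) < (i : ℕ) then g ((i : ℕ) - 1) else 0) :=
          Finset.sum_le_sum fun i _ => Finset.sum_le_sum fun j _ => key i j
      _ = ∑ i ∈ Finset.range p, ((p - 1 - i : ℕ) * g i + (i : ℕ) * g (i - 1)) := by
          rw [← Fin.sum_univ_eq_sum_range
            (fun i => ((p - 1 - i : ℕ) * g i + (i : ℕ) * g (i - 1))) p]
          refine Finset.sum_congr rfl fun i _ => ?_
          rw [← inner (i : ℕ) i.isLt (g i) (g ((i : ℕ) - 1)),
            ← Fin.sum_univ_eq_sum_range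
              (fun j => if (i : ℕ) < j then g i else if j < (i : ℕ) then g ((i : ℕ) - 1) else 0) p]
  -- reindex and finish
  rw [hgap]
  refine le_trans step1 ?_
  rw [Finset.sum_add_distrib, Finset.mul_sum]
  have hS2 : (∑ i ∈ Finset.range p, (i : ℕ) * g (i - 1)) ≤
      ∑ i ∈ Finset.range p, ((i : ℕ) + 1) * g i := by
    obtain ⟨q, rfl⟩ : ∃ q, p = q + 1 := ⟨p - 1, by omega⟩
    rw [Finset.sum_range_succ' (fun i => (i : ℕ) * g (i - 1)) q,
      Finset.sum_range_succ (fun i => ((i : ℕ) + 1) * g i) q]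
    simp only [Nat.cast_zero, zero_mul, add_zero, Nat.add_sub_cancel]
    have hc : ∀ k ∈ Finset.range q, (((k + 1 : ℕ)) : ℝ) * g k = ((k : ℕ) + 1) * g k := by
      intro k _
      push_cast
      ring
    rw [Finset.sum_congr rfl hc]
    have := mul_nonneg (by positivity : (0:ℝ) ≤ (q : ℝ) + 1) (hg_nonneg q)
    linarith
  have hS1 : ∀ i ∈ Finset.range p,
      ((p - 1 - i : ℕ) : ℝ) * g i + ((i : ℕ) + 1) * g i = (p : ℝ) * g i := by
    intro i hi
    rw [Finset.mem_range] at hi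
    have : ((p - 1 - i : ℕ) : ℝ) = (p : ℝ) - 1 - i := by
      have : (p - 1 - i : ℕ) + (i + 1) = p := by omega
      have := congrArg (Nat.cast : ℕ → ℝ) this
      push_cast at this
      linarith
    rw [this]; ring
  calc (∑ i ∈ Finset.range p, ((p - 1 - i : ℕ) : ℝ) * g i)
        + ∑ i ∈ Finset.range p, (i : ℕ) * g (i - 1)
      ≤ (∑ i ∈ Finset.range p, ((p - 1 - i : ℕ) : ℝ) * g i)
        + ∑ i ∈ Finset.range p, ((i : ℕ) + 1) * g i := by linarith
    _ = ∑ i ∈ Finset.range p, (((p - 1 - i : ℕ) : ℝ) * g i + ((i : ℕ) + 1) * g i) := by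
        rw [Finset.sum_add_distrib]
    _ = ∑ i ∈ Finset.range p, (p : ℝ) * g i := Finset.sum_congr rfl hS1
end
end

section
/- Let p ≥ 2 be an integer and let α ≥ 0. The functional F^p_{m,α} is bounded below on R^p if and only if χ ≤ C_p; moreover, when χ ≤ C_p one has F^p_{m,α}(X) ≥ 0 for all X ∈ R^p. -/
open scoped BigOperators
noncomputable section

/-!
By the definition of `C_p`, `χ ≤ C_p` says exactly that `χ Σ_{i≠j} |X_i - X_j|^{1-m}` never exceeds
`Σ_i (X_{i+1} - X_i)^{1-m}` on `R^p`, i.e. that `F^p_m ≥ 0` there, and then `F^p_{m,α} ≥ 0` for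
`α ≥ 0`. Conversely, `F^p_m` is homogeneous of degree `1 - m < 0` under dilations, so if
`F^p_m(X) < 0` then `F^p_{m,α}(λX) → -∞` as `λ → 0⁺`, the confinement term being `O(λ²)`.
-/

open Filter Topology

lemma le_inv_sSup_iff {S : Set ℝ} (hne : S.Nonempty) (hbdd : BddAbove S) (hpos : 0 < sSup S)
    {χ : ℝ} (hχ : 0 < χ) : χ ≤ (sSup S)⁻¹ ↔ ∀ r ∈ S, χ * r ≤ 1 := by
  rw [le_inv_comm₀ hχ hpos, csSup_le_iff hbdd hne]
  exact forall₂_congr fun r _ => by rw [← one_div, le_div_iff₀' hχ]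

lemma memR_sub_mean {p : ℕ} {Y : Fin p → ℝ} (hY : StrictMono Y) :
    memR p (WithLp.toLp 2 fun i => Y i - (∑ j, Y j) / p) := by
  refine ⟨fun i j hij => by simpa using hY hij, ?_⟩
  rcases Nat.eq_zero_or_pos p with rfl | hp
  · simp
  · simp only [Finset.sum_sub_distrib, Finset.sum_const, Finset.card_univ,
      Fintype.card_fin, nsmul_eq_mul]
    field_simp
    ring

lemma exists_memR (p : ℕ) : ∃ X, memR p X :=
  ⟨_, memR_sub_mean (Y := fun i : Fin p => (i : ℝ)) (Nat.strictMono_cast.comp Fin.val_strictMono)⟩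

section Sums

variable {m : ℝ} {p : ℕ} {X : EuclideanSpace ℝ (Fin p)}

lemma gapSum_summand_nonneg (hX : StrictMono fun i => X i) (i : Fin p) :
    0 ≤ if h : (i : ℕ) + 1 < p then (X ⟨(i : ℕ) + 1, h⟩ - X i) ^ (1 - m) else 0 := by
  split_ifs with h
  · exact Real.rpow_nonneg (sub_nonneg.2 (hX.monotone (Fin.le_def.2 (Nat.le_succ _)))) _
  · exact le_rfl

lemma gapSum_pos (hp : 2 ≤ p) (hX : StrictMono fun i => X i) : 0 < gapSum m p X := by
  have h1 : 0 + 1 < p := by omega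
  refine Finset.sum_pos' (fun i _ => gapSum_summand_nonneg hX i) ⟨⟨0, by omega⟩, by simp, ?_⟩
  rw [dif_pos h1]
  exact Real.rpow_pos_of_pos (sub_pos.2 (hX (Fin.lt_def.2 Nat.zero_lt_one))) _

lemma pairSum_summand_nonneg (i j : Fin p) :
    0 ≤ if i ≠ j then |X i - X j| ^ (1 - m) else 0 := by
  split_ifs
  · exact Real.rpow_nonneg (abs_nonneg _) _
  · exact le_rfl

lemma pairSum_pos (hp : 2 ≤ p) (hX : StrictMono fun i => X i) : 0 < pairSum m p X := by
  let i₀ : Fin p := ⟨0, by omega⟩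
  let i₁ : Fin p := ⟨1, by omega⟩
  have h01 : i₀ < i₁ := Fin.lt_def.2 Nat.zero_lt_one
  refine Finset.sum_pos' (fun i _ => Finset.sum_nonneg fun j _ => pairSum_summand_nonneg i j)
    ⟨i₀, Finset.mem_univ _, ?_⟩
  refine Finset.sum_pos' (fun j _ => pairSum_summand_nonneg _ j) ⟨i₁, Finset.mem_univ _, ?_⟩
  rw [if_pos h01.ne]
  exact Real.rpow_pos_of_pos (abs_pos.2 (sub_ne_zero.2 (hX h01).ne)) _

lemma abs_sub_rpow_le_gapSum (hm : 1 < m) (hX : StrictMono fun i => X i) {i j : Fin p}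
    (hij : i < j) : |X i - X j| ^ (1 - m) ≤ gapSum m p X := by
  have h : (i : ℕ) + 1 < p := lt_of_le_of_lt hij j.isLt
  have hnext : X i < X ⟨(i : ℕ) + 1, h⟩ := hX (Fin.lt_def.2 (Nat.lt_succ_self _))
  have hle : X ⟨(i : ℕ) + 1, h⟩ ≤ X j := hX.monotone (Fin.le_def.2 hij)
  calc |X i - X j| ^ (1 - m) ≤ (X ⟨(i : ℕ) + 1, h⟩ - X i) ^ (1 - m) := by
        rw [abs_sub_comm, abs_of_pos (sub_pos.2 (hnext.trans_le hle))]
        exact Real.rpow_le_rpow_of_nonpos (by linarith) (by linarith) (by linarith)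
    _ = if h : (i : ℕ) + 1 < p then (X ⟨(i : ℕ) + 1, h⟩ - X i) ^ (1 - m) else 0 := by
        rw [dif_pos h]
    _ ≤ gapSum m p X :=
        Finset.single_le_sum (fun k _ => gapSum_summand_nonneg hX k) (Finset.mem_univ i)

lemma pairSum_le_mul_gapSum (hm : 1 < m) (hX : StrictMono fun i => X i) :
    pairSum m p X ≤ p * p * gapSum m p X := by
  have hsummand : ∀ i j : Fin p,
      (if i ≠ j then |X i - X j| ^ (1 - m) else 0) ≤ gapSum m p X := by
    intro i j
    split_ifs with hne
    · rcases hne.lt_or_gt with hlt | hlt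
      · exact abs_sub_rpow_le_gapSum hm hX hlt
      · rw [abs_sub_comm]
        exact abs_sub_rpow_le_gapSum hm hX hlt
    · exact Finset.sum_nonneg fun i _ => gapSum_summand_nonneg hX i
  calc pairSum m p X ≤ ∑ _i : Fin p, ∑ _j : Fin p, gapSum m p X :=
        Finset.sum_le_sum fun i _ => Finset.sum_le_sum fun j _ => hsummand i j
    _ = p * p * gapSum m p X := by simp [mul_assoc]

lemma FF_eq_div {χ : ℝ} : FF m χ p X = (gapSum m p X - χ * pairSum m p X) / (m - 1) := by
  rw [FF]
  ring

lemma FF_nonneg_iff {χ : ℝ} (hm : 1 < m) :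
    0 ≤ FF m χ p X ↔ χ * pairSum m p X ≤ gapSum m p X := by
  rw [FF_eq_div, le_div_iff₀ (by linarith : (0:ℝ) < m - 1), zero_mul, sub_nonneg]

end Sums

section Scaling

variable {m : ℝ} {p : ℕ} {X : EuclideanSpace ℝ (Fin p)} {t : ℝ}

lemma memR_smul (ht : 0 < t) (hX : memR p X) : memR p (t • X) := by
  refine ⟨fun i j hij => ?_, ?_⟩
  · simpa using mul_lt_mul_of_pos_left (hX.1 hij) ht
  · simp [← Finset.mul_sum, hX.2]

lemma gapSum_smul (hX : StrictMono fun i => X i) (ht : 0 < t) :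
    gapSum m p (t • X) = t ^ (1 - m) * gapSum m p X := by
  rw [gapSum, gapSum, Finset.mul_sum]
  refine Finset.sum_congr rfl fun i _ => ?_
  split_ifs with h
  · have hnext : X i < X ⟨(i : ℕ) + 1, h⟩ := hX (Fin.lt_def.2 (Nat.lt_succ_self _))
    rw [PiLp.smul_apply, PiLp.smul_apply, smul_eq_mul, smul_eq_mul, ← mul_sub,
      Real.mul_rpow ht.le (by linarith)]
  · rw [mul_zero]

lemma pairSum_smul (ht : 0 < t) : pairSum m p (t • X) = t ^ (1 - m) * pairSum m p X := by
  simp only [pairSum, Finset.mul_sum]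
  refine Finset.sum_congr rfl fun i _ => Finset.sum_congr rfl fun j _ => ?_
  split_ifs
  · rw [PiLp.smul_apply, PiLp.smul_apply, smul_eq_mul, smul_eq_mul, ← mul_sub, abs_mul,
      abs_of_pos ht, Real.mul_rpow ht.le (abs_nonneg _)]
  · rw [mul_zero]

lemma FF_smul {χ : ℝ} (hX : StrictMono fun i => X i) (ht : 0 < t) :
    FF m χ p (t • X) = t ^ (1 - m) * FF m χ p X := by
  rw [FF, FF, gapSum_smul hX ht, pairSum_smul ht]
  ring

lemma exists_FFa_lt_of_FF_neg {χ : ℝ} (hm : 1 < m) (hX : memR p X) (hF : FF m χ p X < 0)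
    (α c : ℝ) : ∃ Y, memR p Y ∧ FFa m χ α p Y < c := by
  have hFF : Tendsto (fun t : ℝ => t ^ (1 - m) * FF m χ p X) (𝓝[>] 0) atBot :=
    (tendsto_rpow_neg_nhdsGT_zero (by linarith)).atTop_mul_const_of_neg hF
  have hconf : Tendsto (fun t : ℝ => α / 2 * ‖t • X‖ ^ 2) (𝓝[>] 0) (𝓝 0) := by
    have hcont : Continuous fun t : ℝ => α / 2 * ‖t • X‖ ^ 2 := by fun_prop
    simpa using (hcont.tendsto 0).mono_left nhdsWithin_le_nhds
  have hlim : Tendsto (fun t : ℝ => FFa m χ α p (t • X)) (𝓝[>] 0) atBot := by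
    refine (hFF.atBot_add hconf).congr' ?_
    filter_upwards [self_mem_nhdsWithin] with t ht
    rw [FFa, FF_smul hX.1 ht]
  obtain ⟨t, hlt, ht⟩ := ((hlim.eventually_lt_atBot c).and self_mem_nhdsWithin).exists
  exact ⟨t • X, memR_smul ht hX, hlt⟩

end Scaling

section Critical

variable {m : ℝ} {p : ℕ}

lemma le_Cp_iff {χ : ℝ} (hm : 1 < m) (hp : 2 ≤ p) (hχ : 0 < χ) :
    χ ≤ Cp m p ↔ ∀ X, memR p X → 0 ≤ FF m χ p X := by
  set S := {r : ℝ | ∃ X, memR p X ∧ r = pairSum m p X / gapSum m p X}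
  obtain ⟨X₀, hX₀⟩ := exists_memR p
  have hbdd : BddAbove S := by
    refine ⟨p * p, ?_⟩
    rintro _ ⟨X, hX, rfl⟩
    rw [div_le_iff₀ (gapSum_pos hp hX.1)]
    exact pairSum_le_mul_gapSum hm hX.1
  have hpos : 0 < sSup S :=
    (div_pos (pairSum_pos hp hX₀.1) (gapSum_pos hp hX₀.1)).trans_le (le_csSup hbdd ⟨X₀, hX₀, rfl⟩)
  have hratio : ∀ X, memR p X →
      (χ * (pairSum m p X / gapSum m p X) ≤ 1 ↔ 0 ≤ FF m χ p X) := fun X hX => by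
    rw [FF_nonneg_iff hm, ← mul_div_assoc, div_le_one (gapSum_pos hp hX.1)]
  rw [Cp, le_inv_sSup_iff (S := S) ⟨_, X₀, hX₀, rfl⟩ hbdd hpos hχ]
  constructor
  · exact fun h X hX => (hratio X hX).1 (h _ ⟨X, hX, rfl⟩)
  · rintro h _ ⟨X, hX, rfl⟩
    exact (hratio X hX).2 (h X hX)

end Critical

theorem stmt3 (m χ : ℝ) (hm : 1 < m) (hχ : 0 < χ) (p : ℕ) (hp : 2 ≤ p)
    (α : ℝ) (hα : 0 ≤ α) :
    ((∃ c : ℝ, ∀ X : EuclideanSpace ℝ (Fin p), memR p X → c ≤ FFa m χ α p X) ↔ χ ≤ Cp m p) ∧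
    (χ ≤ Cp m p → ∀ X : EuclideanSpace ℝ (Fin p), memR p X → 0 ≤ FFa m χ α p X) := by
  have hnonneg : χ ≤ Cp m p → ∀ X, memR p X → 0 ≤ FFa m χ α p X := fun h X hX =>
    add_nonneg ((le_Cp_iff hm hp hχ).1 h X hX) (by positivity)
  refine ⟨⟨fun ⟨c, hc⟩ => ?_, fun h => ⟨0, hnonneg h⟩⟩, hnonneg⟩
  by_contra hgt
  obtain ⟨X, hX, hF⟩ : ∃ X, memR p X ∧ FF m χ p X < 0 := by
    simpa [le_Cp_iff hm hp hχ] using hgt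
  obtain ⟨Y, hY, hlt⟩ := exists_FFa_lt_of_FF_neg hm hX hF α c
  exact (hc Y hY).not_gt hlt
end
end

section
/- Let p ≥ 2 be an integer and suppose χ = C_p. Then the minimum of F^p_m over R^p exists and equals 0, and the minimizer is unique up to dilation: there exists a minimizer V ∈ R^p, and any two minimizers V, W ∈ R^p satisfy W = λV for some λ > 0. -/
open scoped BigOperators
noncomputable section

/-!
In terms of the gaps `g k = X_{k+1} - X_k`, the critical energy is
`F = (m - 1)⁻¹ D (1 - N / (s D))`, where `D` and `N` are the two sums of `F` and
`s = sup N / D = 1 / C_p`. So `F ≥ 0`, and `F = 0` exactly at maximizers of `N / D`.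

Maximizers exist, by induction on the number `q` of gaps. If `s_{q-1}` is attained, appending a
huge gap shows `s_{q-1} < s_q`. After scaling the largest gap to `1`, a configuration with a tiny
gap has a large `D`, while `N ≤ s_{q-1} D + 2 q²`; so near-maximizers have all gaps in a compact
range.

Maximizers are unique up to scaling: scale one so that it lies above the other and touches it at
a gap `k₀`. The Euler–Lagrange equations at `k₀`, together with the strict monotonicity of
`x ↦ x ^ (-m)`, force every block through `k₀` to have the same length in both, hence all gaps
agree.
-/

open Finset Filter Topology

namespace DiscreteHLS

/- A configuration `X_0 < ⋯ < X_q` is encoded by its gaps `g k = X_{k+1} - X_k`, so that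
`blockSum g i j = X_{j+1} - X_i`; with `a = 1 - m`, `gapEnergy` and `pairEnergy` are the two sums
in `F^p_m`, and `maxRatio a q` is `1 / C_{q+1}`. -/
def blockSum (g : ℕ → ℝ) (i j : ℕ) : ℝ := ∑ k ∈ Icc i j, g k

def gapEnergy (a : ℝ) (q : ℕ) (g : ℕ → ℝ) : ℝ := ∑ k ∈ range q, g k ^ a

def pairEnergy (a : ℝ) (q : ℕ) (g : ℕ → ℝ) : ℝ :=
  2 * ∑ i ∈ range q, ∑ j ∈ Ico i q, blockSum g i j ^ a

def energyRatio (a : ℝ) (q : ℕ) (g : ℕ → ℝ) : ℝ := pairEnergy a q g / gapEnergy a q g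

def PosGaps (q : ℕ) (g : ℕ → ℝ) : Prop := ∀ k < q, 0 < g k

def maxRatio (a : ℝ) (q : ℕ) : ℝ := sSup {r | ∃ g, PosGaps q g ∧ r = energyRatio a q g}

section Basic

variable {a : ℝ} {q : ℕ} {g g' : ℕ → ℝ}

lemma PosGaps.mono {l : ℕ} (hg : PosGaps q g) (hl : l ≤ q) : PosGaps l g :=
  fun k hk => hg k (hk.trans_le hl)

lemma PosGaps.const_mul {c : ℝ} (hg : PosGaps q g) (hc : 0 < c) : PosGaps q (fun k => c * g k) :=
  fun k hk => mul_pos hc (hg k hk)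

lemma posGaps_one : PosGaps q (fun _ => 1) := fun _ _ => one_pos

lemma blockSum_pos (hg : PosGaps q g) {i j : ℕ} (hij : i ≤ j) (hj : j < q) :
    0 < blockSum g i j :=
  sum_pos (fun k hk => hg k ((mem_Icc.mp hk).2.trans_lt hj)) ⟨i, by simp [hij]⟩

lemma le_blockSum (hg : PosGaps q g) {i j k : ℕ} (hik : i ≤ k) (hkj : k ≤ j) (hj : j < q) :
    g k ≤ blockSum g i j :=
  single_le_sum (fun l hl => (hg l ((mem_Icc.mp hl).2.trans_lt hj)).le) (by simp [hik, hkj])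

lemma gapEnergy_pos (hq : 0 < q) (hg : PosGaps q g) : 0 < gapEnergy a q g :=
  sum_pos (fun k hk => Real.rpow_pos_of_pos (hg k (mem_range.mp hk)) a) ⟨0, by simpa⟩

lemma pairEnergy_le (ha : a ≤ 0) (hg : PosGaps q g) :
    pairEnergy a q g ≤ 2 * q * gapEnergy a q g := by
  have hrow : ∀ i ∈ range q, ∑ j ∈ Ico i q, blockSum g i j ^ a ≤ q * g i ^ a := by
    intro i hi
    have hi := mem_range.mp hi
    calc ∑ j ∈ Ico i q, blockSum g i j ^ a ≤ ∑ j ∈ Ico i q, g i ^ a :=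
          sum_le_sum fun j hj => Real.rpow_le_rpow_of_nonpos (hg i hi)
            (le_blockSum hg le_rfl (mem_Ico.mp hj).1 (mem_Ico.mp hj).2) ha
      _ = (Ico i q).card * g i ^ a := by rw [sum_const, nsmul_eq_mul]
      _ ≤ q * g i ^ a := by
          gcongr
          · exact (Real.rpow_pos_of_pos (hg i hi) a).le
          · simp
  calc pairEnergy a q g ≤ 2 * ∑ i ∈ range q, (q : ℝ) * g i ^ a := by
        unfold pairEnergy; gcongr with i hi; exact hrow i hi
    _ = 2 * q * gapEnergy a q g := by rw [gapEnergy, ← mul_sum, mul_assoc]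

lemma blockSum_congr (h : ∀ k < q, g k = g' k) {i j : ℕ} (hj : j < q) :
    blockSum g i j = blockSum g' i j :=
  sum_congr rfl fun k hk => h k ((mem_Icc.mp hk).2.trans_lt hj)

lemma gapEnergy_congr (h : ∀ k < q, g k = g' k) : gapEnergy a q g = gapEnergy a q g' :=
  sum_congr rfl fun k hk => by rw [h k (mem_range.mp hk)]

lemma pairEnergy_congr (h : ∀ k < q, g k = g' k) : pairEnergy a q g = pairEnergy a q g' := by
  unfold pairEnergy
  congr 1
  exact sum_congr rfl fun i _ => sum_congr rfl fun j hj => by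
    rw [blockSum_congr h (mem_Ico.mp hj).2]

lemma energyRatio_congr (h : ∀ k < q, g k = g' k) : energyRatio a q g = energyRatio a q g' := by
  rw [energyRatio, energyRatio, gapEnergy_congr h, pairEnergy_congr h]

lemma blockSum_const_mul (c : ℝ) (g : ℕ → ℝ) (i j : ℕ) :
    blockSum (fun k => c * g k) i j = c * blockSum g i j :=
  (mul_sum ..).symm

lemma gapEnergy_const_mul {c : ℝ} (hc : 0 ≤ c) (hg : PosGaps q g) :
    gapEnergy a q (fun k => c * g k) = c ^ a * gapEnergy a q g := by
  rw [gapEnergy, gapEnergy, mul_sum]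
  exact sum_congr rfl fun k hk => Real.mul_rpow hc (hg k (mem_range.mp hk)).le

lemma pairEnergy_const_mul {c : ℝ} (hc : 0 ≤ c) (hg : PosGaps q g) :
    pairEnergy a q (fun k => c * g k) = c ^ a * pairEnergy a q g := by
  have hterm : ∀ i ∈ range q, ∀ j ∈ Ico i q,
      blockSum (fun k => c * g k) i j ^ a = c ^ a * blockSum g i j ^ a := fun i _ j hj => by
    rw [blockSum_const_mul,
      Real.mul_rpow hc (blockSum_pos hg (mem_Ico.mp hj).1 (mem_Ico.mp hj).2).le]
  simp only [pairEnergy, sum_congr rfl fun i hi => sum_congr rfl (hterm i hi), ← mul_sum]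
  ring

lemma energyRatio_const_mul {c : ℝ} (hc : 0 < c) (hg : PosGaps q g) :
    energyRatio a q (fun k => c * g k) = energyRatio a q g := by
  rw [energyRatio, pairEnergy_const_mul hc.le hg, gapEnergy_const_mul hc.le hg,
    mul_div_mul_left _ _ (Real.rpow_pos_of_pos hc a).ne', energyRatio]

lemma pairEnergy_pos (hq : 0 < q) (hg : PosGaps q g) : 0 < pairEnergy a q g := by
  refine mul_pos two_pos (sum_pos (fun i hi => ?_) ⟨0, by simpa⟩)
  refine sum_pos (fun j hj => ?_) ⟨i, by simpa using hi⟩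
  exact Real.rpow_pos_of_pos (blockSum_pos hg (mem_Ico.mp hj).1 (mem_Ico.mp hj).2) a

lemma energyRatio_pos (hq : 0 < q) (hg : PosGaps q g) : 0 < energyRatio a q g :=
  div_pos (pairEnergy_pos hq hg) (gapEnergy_pos hq hg)

lemma energyRatio_le_two_mul (ha : a ≤ 0) (hq : 0 < q) (hg : PosGaps q g) :
    energyRatio a q g ≤ 2 * q :=
  (div_le_iff₀ (gapEnergy_pos hq hg)).mpr (pairEnergy_le ha hg)

lemma energyRatio_le_maxRatio (ha : a ≤ 0) (hq : 0 < q) (hg : PosGaps q g) :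
    energyRatio a q g ≤ maxRatio a q :=
  le_csSup ⟨2 * q, by rintro r ⟨g, hg, rfl⟩; exact energyRatio_le_two_mul ha hq hg⟩ ⟨g, hg, rfl⟩

lemma maxRatio_le {r : ℝ} (h : ∀ g, PosGaps q g → energyRatio a q g ≤ r) : maxRatio a q ≤ r :=
  csSup_le ⟨_, 1, posGaps_one, rfl⟩ (by rintro _ ⟨g, hg, rfl⟩; exact h g hg)

lemma maxRatio_pos (ha : a ≤ 0) (hq : 0 < q) : 0 < maxRatio a q :=
  (energyRatio_pos hq posGaps_one).trans_le (energyRatio_le_maxRatio ha hq posGaps_one)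

end Basic

section Append
variable {a : ℝ} {q : ℕ} {g : ℕ → ℝ}

lemma gapEnergy_succ (a : ℝ) (q : ℕ) (g : ℕ → ℝ) :
    gapEnergy a (q + 1) g = gapEnergy a q g + g q ^ a :=
  sum_range_succ ..

lemma pairEnergy_succ (a : ℝ) (q : ℕ) (g : ℕ → ℝ) :
    pairEnergy a (q + 1) g = pairEnergy a q g + 2 * ∑ i ∈ range (q + 1), blockSum g i q ^ a := by
  have hrow : ∀ i ∈ range (q + 1), ∑ j ∈ Ico i (q + 1), blockSum g i j ^ a
      = ∑ j ∈ Ico i q, blockSum g i j ^ a + blockSum g i q ^ a :=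
    fun i hi => sum_Ico_succ_top (mem_range_succ_iff.mp hi) _
  rw [pairEnergy, sum_congr rfl hrow, sum_add_distrib, sum_range_succ _ q, Ico_self, sum_empty,
    add_zero, pairEnergy, mul_add]

lemma exists_rpow_lt_rpow_add (a : ℝ) (q : ℕ) {L : ℝ} (hL : 0 ≤ L) :
    ∃ G : ℝ, 0 < G ∧ q * G ^ a < (q + 1) * (L + G) ^ a := by
  have hlim : Tendsto (fun G : ℝ => ((L + G) / G) ^ a) atTop (𝓝 1) := by
    have h : Tendsto (fun G : ℝ => L / G + 1) atTop (𝓝 1) := by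
      simpa using (tendsto_id.const_div_atTop L).add_const 1
    have h' : Tendsto (fun G : ℝ => (L + G) / G) atTop (𝓝 1) := by
      refine h.congr' ?_
      filter_upwards [eventually_gt_atTop 0] with G hG
      field_simp
    simpa using h'.rpow_const (Or.inl one_ne_zero)
  have hlt : (q : ℝ) / (q + 1) < 1 := (div_lt_one (by positivity)).mpr (lt_add_one _)
  obtain ⟨G, hG, hGpos⟩ := ((hlim.eventually (eventually_gt_nhds hlt)).and
    (eventually_gt_atTop 0)).exists
  refine ⟨G, hGpos, ?_⟩
  rw [Real.div_rpow (by positivity) hGpos.le, div_lt_div_iff₀ (by positivity)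
    (Real.rpow_pos_of_pos hGpos a)] at hG
  linarith

/-- The witness appends a gap so large that all `q + 1` new blocks ending with it have almost
the same length. -/
lemma exists_energyRatio_lt_succ (ha : a < 0) (hq : 0 < q) (hg : PosGaps q g) :
    ∃ g', PosGaps (q + 1) g' ∧ energyRatio a q g < energyRatio a (q + 1) g' := by
  set L := ∑ k ∈ range q, g k
  obtain ⟨G, hG, hGL⟩ := exists_rpow_lt_rpow_add a q
    (sum_nonneg fun k hk => (hg k (mem_range.mp hk)).le)
  set g' := Function.update g q G
  have hg'q : g' q = G := Function.update_self ..
  have hgg' : ∀ k < q, g k = g' k := fun k hk => (Function.update_of_ne hk.ne _ _).symm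
  have hg' : PosGaps (q + 1) g' := fun k hk => by
    rcases (Nat.lt_succ_iff.mp hk).lt_or_eq with hk | rfl
    · exact (hgg' k hk) ▸ hg k hk
    · exact hg'q ▸ hG
  have hT : blockSum g' 0 q = L + G := by
    rw [blockSum, ← Nat.range_succ_eq_Icc_zero, sum_range_succ, hg'q,
      sum_congr rfl fun k hk => (hgg' k (mem_range.mp hk)).symm]
  have hlast : (q + 1) * (L + G) ^ a ≤ ∑ i ∈ range (q + 1), blockSum g' i q ^ a := by
    rw [← hT]
    have := card_nsmul_le_sum (range (q + 1)) (fun i => blockSum g' i q ^ a) (blockSum g' 0 q ^ a)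
      fun i hi => Real.rpow_le_rpow_of_nonpos
      (blockSum_pos hg' (mem_range_succ_iff.mp hi) (lt_add_one q))
      (sum_le_sum_of_subset_of_nonneg (Icc_subset_Icc_left (Nat.zero_le i))
        fun k hk _ => (hg' k (Nat.lt_succ_of_le (mem_Icc.mp hk).2)).le) ha.le
    rwa [card_range, nsmul_eq_mul, Nat.cast_succ] at this
  have hD := gapEnergy_pos (a := a) hq hg
  have hN := pairEnergy_le ha.le hg
  have hGa := Real.rpow_pos_of_pos hG a
  refine ⟨g', hg', ?_⟩
  rw [energyRatio, energyRatio, pairEnergy_succ, gapEnergy_succ, hg'q, ← pairEnergy_congr hgg',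
    ← gapEnergy_congr hgg', div_lt_div_iff₀ hD (by positivity)]
  nlinarith [mul_le_mul_of_nonneg_right hN hGa.le, mul_lt_mul_of_pos_right hGL hD]

lemma maxRatio_le_succ (ha : a < 0) (hq : 0 < q) : maxRatio a q ≤ maxRatio a (q + 1) :=
  maxRatio_le fun g hg => by
    obtain ⟨g', hg', hlt⟩ := exists_energyRatio_lt_succ ha hq hg
    exact hlt.le.trans (energyRatio_le_maxRatio ha.le q.succ_pos hg')

lemma maxRatio_lt_succ (ha : a < 0) (hq : 0 < q) (hg : PosGaps q g)
    (hmax : energyRatio a q g = maxRatio a q) : maxRatio a q < maxRatio a (q + 1) := by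
  obtain ⟨g', hg', hlt⟩ := exists_energyRatio_lt_succ ha hq hg
  exact hmax ▸ hlt.trans_le (energyRatio_le_maxRatio ha.le q.succ_pos hg')

lemma maxRatio_mono (ha : a < 0) {l : ℕ} (hl : 0 < l) (hlq : l ≤ q) :
    maxRatio a l ≤ maxRatio a q := by
  induction q, hlq using Nat.le_induction with
  | base => rfl
  | succ n hln ih => exact ih.trans (maxRatio_le_succ ha (hl.trans_le hln))

end Append

section Cluster
variable {a : ℝ} {q : ℕ} {g : ℕ → ℝ}

lemma pairEnergy_le_maxRatio_mul (ha : a < 0) {l r : ℕ} (hlr : l ≤ r)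
    (hg : PosGaps l g) : pairEnergy a l g ≤ maxRatio a r * gapEnergy a l g := by
  rcases l.eq_zero_or_pos with rfl | hl
  · simp [pairEnergy, gapEnergy]
  · have hD := gapEnergy_pos (a := a) hl hg
    calc pairEnergy a l g = energyRatio a l g * gapEnergy a l g := (div_mul_cancel₀ _ hD.ne').symm
      _ ≤ maxRatio a r * gapEnergy a l g := by
          gcongr
          exact (energyRatio_le_maxRatio ha.le hl hg).trans (maxRatio_mono ha hl hlr)

lemma pairEnergy_shift (a : ℝ) (g : ℕ → ℝ) (c q : ℕ) :
    2 * ∑ i ∈ Ico c q, ∑ j ∈ Ico i q, blockSum g i j ^ a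
      = pairEnergy a (q - c) (fun t => g (t + c)) := by
  have hblock : ∀ i j, blockSum (fun t => g (t + c)) i j = blockSum g (i + c) (j + c) := by
    intro i j
    rw [blockSum, blockSum, ← map_add_right_Icc, sum_map]
    rfl
  rw [pairEnergy, sum_Ico_eq_sum_range]
  congr 1
  refine sum_congr rfl fun i _ => ?_
  rw [sum_Ico_eq_sum_range, sum_Ico_eq_sum_range, show q - (c + i) = q - c - i by omega]
  exact sum_congr rfl fun t _ => by rw [hblock]; congr 2 <;> omega

lemma gapEnergy_add_gapEnergy_shift_le (hg : PosGaps q g) {ks : ℕ} (hks : ks < q) :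
    gapEnergy a ks g + gapEnergy a (q - (ks + 1)) (fun t => g (t + (ks + 1)))
      ≤ gapEnergy a q g := by
  have hshift : gapEnergy a (q - (ks + 1)) (fun t => g (t + (ks + 1)))
      = ∑ k ∈ Ico (ks + 1) q, g k ^ a := by
    rw [gapEnergy, sum_Ico_eq_sum_range]
    exact sum_congr rfl fun t _ => by rw [add_comm]
  rw [hshift, gapEnergy, gapEnergy, ← sum_range_add_sum_Ico _ hks.le,
    sum_eq_sum_Ico_succ_bot hks]
  linarith [Real.rpow_pos_of_pos (hg ks hks) a]

/-- Blocks avoiding a gap of length `≥ 1` lie in one of two shorter configurations; the at most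
`q ^ 2` blocks containing it contribute at most `1` each. -/
lemma pairEnergy_le_of_one_le (ha : a < 0) (hq : 2 ≤ q) (hg : PosGaps q g) {ks : ℕ}
    (hks : ks < q) (h1 : 1 ≤ g ks) :
    pairEnergy a q g ≤ maxRatio a (q - 1) * gapEnergy a q g + 2 * q ^ 2 := by
  set f := fun i j => blockSum g i j ^ a
  have hstraddle : ∀ i ≤ ks, ∑ j ∈ Ico ks q, f i j ≤ q := by
    intro i hi
    calc ∑ j ∈ Ico ks q, f i j ≤ #(Ico ks q) • (1 : ℝ) := sum_le_card_nsmul _ _ _ fun j hj =>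
          Real.rpow_le_one_of_one_le_of_nonpos
            (h1.trans (le_blockSum hg hi (mem_Ico.mp hj).1 (mem_Ico.mp hj).2)) ha.le
      _ ≤ q := by simp
  have hsplit : pairEnergy a q g ≤ pairEnergy a ks g
      + pairEnergy a (q - (ks + 1)) (fun t => g (t + (ks + 1))) + 2 * q ^ 2 := by
    have hleft : ∑ i ∈ range ks, ∑ j ∈ Ico i q, f i j
        ≤ ∑ i ∈ range ks, ∑ j ∈ Ico i ks, f i j + ks * q := by
      calc ∑ i ∈ range ks, ∑ j ∈ Ico i q, f i j
          = ∑ i ∈ range ks, (∑ j ∈ Ico i ks, f i j + ∑ j ∈ Ico ks q, f i j) :=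
            sum_congr rfl fun i hi => (sum_Ico_consecutive _ (mem_range.mp hi).le hks.le).symm
        _ ≤ ∑ i ∈ range ks, (∑ j ∈ Ico i ks, f i j + q) :=
            sum_le_sum fun i hi => by gcongr; exact hstraddle i (mem_range.mp hi).le
        _ = ∑ i ∈ range ks, ∑ j ∈ Ico i ks, f i j + ks * q := by simp [sum_add_distrib]
    have hmid : ∑ i ∈ Ico ks q, ∑ j ∈ Ico i q, f i j
        ≤ q + ∑ i ∈ Ico (ks + 1) q, ∑ j ∈ Ico i q, f i j := by
      rw [sum_eq_sum_Ico_succ_bot hks]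
      gcongr
      exact hstraddle ks le_rfl
    have hkq : (ks : ℝ) + 1 ≤ q := by exact_mod_cast hks
    rw [← pairEnergy_shift a g (ks + 1) q, pairEnergy, pairEnergy, ← sum_range_add_sum_Ico _ hks.le]
    nlinarith
  have hright : PosGaps (q - (ks + 1)) fun t => g (t + (ks + 1)) := fun k hk => hg _ (by omega)
  nlinarith [pairEnergy_le_maxRatio_mul ha (by omega : ks ≤ q - 1) (hg.mono hks.le),
    pairEnergy_le_maxRatio_mul ha (by omega : q - (ks + 1) ≤ q - 1) hright,
    gapEnergy_add_gapEnergy_shift_le (a := a) hg hks, maxRatio_pos ha.le (by omega : 0 < q - 1)]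

end Cluster

section Existence
variable {a : ℝ} {q : ℕ} {g : ℕ → ℝ}

lemma continuousOn_energyRatio (hq : 0 < q) : ContinuousOn (energyRatio a q) {g | PosGaps q g} := by
  have hblock : ∀ i j, Continuous fun g : ℕ → ℝ => blockSum g i j :=
    fun i j => continuous_finsetSum _ fun k _ => continuous_apply k
  have hN : ContinuousOn (pairEnergy a q) {g | PosGaps q g} := by
    refine continuousOn_const.mul (continuousOn_finsetSum _ fun i _ =>
      continuousOn_finsetSum _ fun j hj => (hblock i j).continuousOn.rpow_const fun g hg => ?_)
    exact Or.inl (blockSum_pos hg (mem_Ico.mp hj).1 (mem_Ico.mp hj).2).ne'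
  have hD : ContinuousOn (gapEnergy a q) {g | PosGaps q g} :=
    continuousOn_finsetSum _ fun k hk => (continuous_apply k).continuousOn.rpow_const
      fun g hg => Or.inl (hg k (mem_range.mp hk)).ne'
  exact hN.div hD fun g hg => (gapEnergy_pos hq hg).ne'

lemma exists_forall_energyRatio_le (hq : 0 < q) {μ : ℝ} (hμ : 0 < μ) (hμ1 : μ ≤ 1) :
    ∃ g₀, PosGaps q g₀ ∧
      ∀ g, (∀ k < q, μ ≤ g k ∧ g k ≤ 1) → energyRatio a q g ≤ energyRatio a q g₀ := by
  set K : Set (ℕ → ℝ) := Set.Icc (fun _ => μ) (fun _ => 1)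
  have hK : K ⊆ {g | PosGaps q g} := fun g hg k _ => hμ.trans_le (hg.1 k)
  obtain ⟨g₀, hg₀, hmax⟩ := isCompact_Icc.exists_isMaxOn ⟨fun _ => 1, fun _ => hμ1, le_rfl⟩
    ((continuousOn_energyRatio (a := a) hq).mono hK)
  refine ⟨g₀, hK hg₀, fun g hg => ?_⟩
  set g' : ℕ → ℝ := fun k => if k < q then g k else 1
  have hg' : g' ∈ K := ⟨fun k => by by_cases hk : k < q <;> simp [g', hk, hg, hμ1],
    fun k => by by_cases hk : k < q <;> simp [g', hk, hg]⟩
  rw [energyRatio_congr (g' := g') fun k hk => by simp [g', hk]]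
  exact hmax hg'

lemma exists_pos_mul_le_one (hq : 0 < q) (hg : PosGaps q g) :
    ∃ c > 0, (∀ k < q, c * g k ≤ 1) ∧ ∃ ks < q, c * g ks = 1 := by
  obtain ⟨ks, hks, hmax⟩ := exists_max_image (range q) g ⟨0, mem_range.mpr hq⟩
  have hks := mem_range.mp hks
  refine ⟨(g ks)⁻¹, inv_pos.mpr (hg ks hks), fun k hk => ?_, ks, hks,
    inv_mul_cancel₀ (hg ks hks).ne'⟩
  rw [inv_mul_le_one₀ (hg ks hks)]
  exact hmax k (mem_range.mpr hk)

lemma energyRatio_le_of_small_gap (ha : a < 0) (hq : 2 ≤ q) (hg : PosGaps q g) {ks k₀ : ℕ}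
    (hks : ks < q) (h1 : 1 ≤ g ks) (hk₀ : k₀ < q) {μ : ℝ} (hsmall : g k₀ < μ) :
    energyRatio a q g ≤ maxRatio a (q - 1) + 2 * q ^ 2 / μ ^ a := by
  have hD := gapEnergy_pos (a := a) (by omega) hg
  have hμD : μ ^ a < gapEnergy a q g := by
    refine (Real.rpow_lt_rpow_of_neg (hg k₀ hk₀) hsmall ha).trans_le ?_
    exact single_le_sum (f := fun k => g k ^ a)
      (fun k hk => (Real.rpow_pos_of_pos (hg k (mem_range.mp hk)) a).le) (mem_range.mpr hk₀)
  have hμ : 0 < μ ^ a := Real.rpow_pos_of_pos ((hg k₀ hk₀).trans hsmall) a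
  calc energyRatio a q g ≤ (maxRatio a (q - 1) * gapEnergy a q g + 2 * q ^ 2) / gapEnergy a q g :=
        div_le_div_of_nonneg_right (pairEnergy_le_of_one_le ha hq hg hks h1) hD.le
    _ = maxRatio a (q - 1) + 2 * q ^ 2 / gapEnergy a q g := by field_simp
    _ ≤ maxRatio a (q - 1) + 2 * q ^ 2 / μ ^ a := by gcongr

lemma exists_energyRatio_eq_maxRatio_of_lt (ha : a < 0) (hq : 2 ≤ q)
    (hlt : maxRatio a (q - 1) < maxRatio a q) :
    ∃ g, PosGaps q g ∧ energyRatio a q g = maxRatio a q := by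
  have hsmall : Tendsto (fun μ : ℝ => maxRatio a (q - 1) + 2 * q ^ 2 / μ ^ a) (𝓝[>] 0)
      (𝓝 (maxRatio a (q - 1))) := by
    simpa using ((tendsto_rpow_neg_nhdsGT_zero ha).const_div_atTop (2 * (q : ℝ) ^ 2)).const_add
      (maxRatio a (q - 1))
  have hunit : ∀ᶠ μ : ℝ in 𝓝[>] 0, μ ∈ Set.Ioo 0 1 := Ioo_mem_nhdsGT one_pos
  obtain ⟨μ, hμlt, hμ, hμ1⟩ := ((hsmall.eventually (eventually_lt_nhds hlt)).and hunit).exists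
  obtain ⟨g₀, hg₀, hmax⟩ := exists_forall_energyRatio_le (a := a) (q := q) (by omega) hμ hμ1.le
  have hbound : maxRatio a q
      ≤ max (energyRatio a q g₀) (maxRatio a (q - 1) + 2 * q ^ 2 / μ ^ a) := by
    refine maxRatio_le fun g hg => ?_
    obtain ⟨c, hc, hle, ks, hks, h1⟩ := exists_pos_mul_le_one (by omega) hg
    rw [← energyRatio_const_mul hc hg]
    by_cases hbox : ∀ k < q, μ ≤ c * g k
    · exact le_max_of_le_left (hmax _ fun k hk => ⟨hbox k hk, hle k hk⟩)
    · push Not at hbox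
      obtain ⟨k₀, hk₀, hk₀μ⟩ := hbox
      exact le_max_of_le_right
        (energyRatio_le_of_small_gap ha hq (hg.const_mul hc) hks h1.ge hk₀ hk₀μ)
  exact ⟨g₀, hg₀, le_antisymm (energyRatio_le_maxRatio ha.le (by omega) hg₀)
    ((le_max_iff.mp hbound).resolve_right hμlt.not_ge)⟩

lemma energyRatio_one (hg : PosGaps 1 g) : energyRatio a 1 g = 2 := by
  have : (0 : ℝ) < g 0 ^ a := Real.rpow_pos_of_pos (hg 0 one_pos) a
  simp [energyRatio, pairEnergy, gapEnergy, blockSum, this.ne']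

theorem exists_energyRatio_eq_maxRatio (ha : a < 0) (hq : 0 < q) :
    ∃ g, PosGaps q g ∧ energyRatio a q g = maxRatio a q := by
  induction q, hq using Nat.le_induction with
  | base =>
    refine ⟨fun _ => 1, posGaps_one, le_antisymm (energyRatio_le_maxRatio ha.le one_pos posGaps_one)
      (maxRatio_le fun g hg => ?_)⟩
    rw [energyRatio_one hg, energyRatio_one posGaps_one]
  | succ n hn ih =>
    obtain ⟨g, hg, hmax⟩ := ih
    exact exists_energyRatio_eq_maxRatio_of_lt ha (by omega) (maxRatio_lt_succ ha hn hg hmax)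

end Existence

section EulerLagrange
variable {a : ℝ} {q : ℕ} {g h : ℕ → ℝ}

def pairEnergyGrad (a : ℝ) (q : ℕ) (g : ℕ → ℝ) (k : ℕ) : ℝ :=
  ∑ i ∈ range q, ∑ j ∈ Ico i q, if i ≤ k ∧ k ≤ j then blockSum g i j ^ (a - 1) else 0

lemma blockSum_update (g : ℕ → ℝ) (k : ℕ) (t : ℝ) (i j : ℕ) :
    blockSum (Function.update g k t) i j
      = blockSum g i j + if i ≤ k ∧ k ≤ j then t - g k else 0 := by
  by_cases hk : i ≤ k ∧ k ≤ j
  · have hmem : k ∈ Icc i j := mem_Icc.mpr hk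
    rw [blockSum, blockSum, sum_update_of_mem hmem, sum_eq_add_sum_sdiff_singleton_of_mem hmem,
      if_pos hk]
    ring
  · rw [blockSum, blockSum, sum_update_of_notMem (by simpa using hk), if_neg hk, add_zero]

lemma hasDerivAt_gapEnergy_update {k : ℕ} (hk : k < q) (hgk : 0 < g k) :
    HasDerivAt (fun t => gapEnergy a q (Function.update g k t)) (a * g k ^ (a - 1)) (g k) := by
  have hterm : ∀ l ∈ range q, HasDerivAt (fun t => Function.update g k t l ^ a)
      (if l = k then a * g k ^ (a - 1) else 0) (g k) := by
    intro l _
    by_cases hl : l = k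
    · subst hl
      simpa using Real.hasDerivAt_rpow_const (p := a) (Or.inl hgk.ne')
    · simpa [Function.update_of_ne hl, hl] using hasDerivAt_const (g k) (g l ^ a)
  exact (HasDerivAt.fun_sum hterm).congr_deriv (by simp [sum_ite_eq', hk])

lemma hasDerivAt_pairEnergy_update (hg : PosGaps q g) (k : ℕ) :
    HasDerivAt (fun t => pairEnergy a q (Function.update g k t))
      (2 * (a * pairEnergyGrad a q g k)) (g k) := by
  have hterm : ∀ i ∈ range q, ∀ j ∈ Ico i q,
      HasDerivAt (fun t => blockSum (Function.update g k t) i j ^ a)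
        (a * if i ≤ k ∧ k ≤ j then blockSum g i j ^ (a - 1) else 0) (g k) := by
    intro i _ j hj
    simp only [blockSum_update]
    by_cases hkij : i ≤ k ∧ k ≤ j
    · simp only [if_pos hkij]
      have hpos := blockSum_pos hg (mem_Ico.mp hj).1 (mem_Ico.mp hj).2
      simpa using ((hasDerivAt_id (g k)).sub_const (g k)).const_add (blockSum g i j)
        |>.rpow_const (p := a) (Or.inl (by simpa using hpos.ne'))
    · simpa [hkij] using hasDerivAt_const (g k) (blockSum g i j ^ a)
  exact ((HasDerivAt.fun_sum fun i hi => HasDerivAt.fun_sum (hterm i hi)).const_mul 2).congr_deriv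
    (by simp only [pairEnergyGrad, mul_sum])

/-- Euler–Lagrange equation: at a maximizer, `pairEnergy - maxRatio * gapEnergy` has a local
maximum in every gap. -/
lemma two_mul_pairEnergyGrad_eq (ha : a < 0) (hq : 0 < q) (hg : PosGaps q g)
    (hmax : energyRatio a q g = maxRatio a q) {k : ℕ} (hk : k < q) :
    2 * pairEnergyGrad a q g k = maxRatio a q * g k ^ (a - 1) := by
  set s := maxRatio a q
  have hN : pairEnergy a q g = s * gapEnergy a q g := by
    rw [← hmax, energyRatio, div_mul_cancel₀ _ (gapEnergy_pos hq hg).ne']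
  have hlocal : IsLocalMax (fun t => pairEnergy a q (Function.update g k t)
      - s * gapEnergy a q (Function.update g k t)) (g k) := by
    filter_upwards [eventually_gt_nhds (hg k hk)] with t ht
    have hgt : PosGaps q (Function.update g k t) := fun l hl => by
      rcases eq_or_ne l k with rfl | hlk
      · simpa using ht
      · simpa [Function.update_of_ne hlk] using hg l hl
    have hle := energyRatio_le_maxRatio ha.le hq hgt
    rw [energyRatio, div_le_iff₀ (gapEnergy_pos hq hgt)] at hle
    rw [Function.update_eq_self]
    linarith
  have hzero := hlocal.hasDerivAt_eq_zero
    ((hasDerivAt_pairEnergy_update hg k).sub ((hasDerivAt_gapEnergy_update hk (hg k hk)).const_mul s))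
  have : a * (2 * pairEnergyGrad a q g k - s * g k ^ (a - 1)) = 0 := by linear_combination hzero
  linarith [(mul_eq_zero.mp this).resolve_left ha.ne]

end EulerLagrange

section Uniqueness
variable {a : ℝ} {q : ℕ} {g h : ℕ → ℝ}

lemma blockSum_eq_of_le_of_pairEnergyGrad_eq (ha : a < 1) (hh : PosGaps q h)
    (hle : ∀ k < q, h k ≤ g k) {k₀ : ℕ} (heq : pairEnergyGrad a q h k₀ = pairEnergyGrad a q g k₀)
    {i j : ℕ} (hik : i ≤ k₀) (hkj : k₀ ≤ j) (hj : j < q) : blockSum h i j = blockSum g i j := by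
  have hmono : ∀ i ∈ range q, ∀ j ∈ Ico i q,
      (if i ≤ k₀ ∧ k₀ ≤ j then blockSum g i j ^ (a - 1) else 0)
        ≤ if i ≤ k₀ ∧ k₀ ≤ j then blockSum h i j ^ (a - 1) else 0 := by
    intro i _ j hj
    split_ifs
    · exact Real.rpow_le_rpow_of_nonpos (blockSum_pos hh (mem_Ico.mp hj).1 (mem_Ico.mp hj).2)
        (sum_le_sum fun k hk => hle k ((mem_Icc.mp hk).2.trans_lt (mem_Ico.mp hj).2)) (by linarith)
    · exact le_rfl
  have hrows := (sum_eq_sum_iff_of_le fun i hi => sum_le_sum (hmono i hi)).mp heq.symm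
  have hij := (sum_eq_sum_iff_of_le (hmono i (mem_range.mpr ((hik.trans hkj).trans_lt hj)))).mp
    (hrows i (mem_range.mpr ((hik.trans hkj).trans_lt hj))) j (mem_Ico.mpr ⟨hik.trans hkj, hj⟩)
  rw [if_pos ⟨hik, hkj⟩, if_pos ⟨hik, hkj⟩] at hij
  have hpos := blockSum_pos hh (hik.trans hkj) hj
  have hhg : blockSum h i j ≤ blockSum g i j :=
    sum_le_sum fun k hk => hle k ((mem_Icc.mp hk).2.trans_lt hj)
  exact ((Real.rpow_left_inj (hpos.le.trans hhg) hpos.le (by linarith : a - 1 ≠ 0)).mp hij).symm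

lemma eq_of_blockSum_eq {g' : ℕ → ℝ} {k₀ : ℕ} (hk₀ : k₀ < q)
    (h : ∀ i j, i ≤ k₀ → k₀ ≤ j → j < q → blockSum g i j = blockSum g' i j) {k : ℕ} (hk : k < q) :
    g k = g' k := by
  rcases lt_trichotomy k k₀ with hlt | rfl | hgt
  · have hsplit : ∀ f : ℕ → ℝ, blockSum f k k₀ = f k + blockSum f (k + 1) k₀ := fun f => by
      rw [blockSum, blockSum, ← add_sum_Ioc_eq_sum_Icc hlt.le, Icc_add_one_left_eq_Ioc]
    have := h k k₀ hlt.le le_rfl hk₀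
    rw [hsplit, hsplit, h (k + 1) k₀ hlt le_rfl hk₀] at this
    linarith
  · simpa [blockSum] using h k k le_rfl le_rfl hk
  · obtain ⟨n, rfl⟩ : ∃ n, k = n + 1 := ⟨k - 1, by omega⟩
    have hsplit : ∀ f : ℕ → ℝ, blockSum f k₀ (n + 1) = blockSum f k₀ n + f (n + 1) :=
      fun f => sum_Icc_succ_top (by omega) f
    have := h k₀ (n + 1) le_rfl hgt.le hk
    rw [hsplit, hsplit, h k₀ n le_rfl (by omega) (by omega)] at this
    linarith

theorem exists_eq_const_mul_of_energyRatio_eq_maxRatio (ha : a < 0) (hq : 0 < q)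
    (hg : PosGaps q g) (hgmax : energyRatio a q g = maxRatio a q)
    (hh : PosGaps q h) (hhmax : energyRatio a q h = maxRatio a q) :
    ∃ c > 0, ∀ k < q, h k = c * g k := by
  obtain ⟨k₀, hk₀, hmax⟩ := exists_max_image (range q) (fun k => h k / g k) ⟨0, mem_range.mpr hq⟩
  have hk₀ := mem_range.mp hk₀
  set c := h k₀ / g k₀
  have hc : 0 < c := div_pos (hh k₀ hk₀) (hg k₀ hk₀)
  set g' : ℕ → ℝ := fun k => c * g k
  have hg' : PosGaps q g' := hg.const_mul hc
  have hle : ∀ k < q, h k ≤ g' k := fun k hk =>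
    (div_le_iff₀ (hg k hk)).mp (hmax k (mem_range.mpr hk))
  have htouch : h k₀ = g' k₀ := (div_mul_cancel₀ _ (hg k₀ hk₀).ne').symm
  have hg'max : energyRatio a q g' = maxRatio a q := (energyRatio_const_mul hc hg).trans hgmax
  have hgrad : pairEnergyGrad a q h k₀ = pairEnergyGrad a q g' k₀ := by
    have hh₀ := two_mul_pairEnergyGrad_eq ha hq hh hhmax hk₀
    have hg₀ := two_mul_pairEnergyGrad_eq ha hq hg' hg'max hk₀
    rw [htouch, ← hg₀] at hh₀
    linarith
  exact ⟨c, hc, fun k hk => eq_of_blockSum_eq hk₀ (fun i j hi hj hjq =>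
    blockSum_eq_of_le_of_pairEnergyGrad_eq (by linarith) hh hle hgrad hi hj hjq) hk⟩

end Uniqueness

section Configurations
variable {p : ℕ} {X : EuclideanSpace ℝ (Fin p)} {g : ℕ → ℝ}

/-- The coordinates of `X` as a sequence, padded with the junk value `0` from index `p` on. -/
def coord (X : EuclideanSpace ℝ (Fin p)) (i : ℕ) : ℝ := if h : i < p then X ⟨i, h⟩ else 0

def gaps (X : EuclideanSpace ℝ (Fin p)) (k : ℕ) : ℝ := coord X (k + 1) - coord X k

def ofGaps (p : ℕ) (g : ℕ → ℝ) : EuclideanSpace ℝ (Fin p) :=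
  WithLp.toLp 2 fun i => ∑ k ∈ range i, g k - (∑ i ∈ range p, ∑ k ∈ range i, g k) / p

@[simp] lemma coord_fin (X : EuclideanSpace ℝ (Fin p)) (i : Fin p) : coord X i = X i := by
  simp [coord]

lemma coord_sub_coord (X : EuclideanSpace ℝ (Fin p)) {i j : ℕ} (hij : i ≤ j) :
    coord X j - coord X i = ∑ k ∈ Ico i j, gaps X k :=
  (sum_Ico_sub _ hij).symm

lemma gaps_pos (hX : StrictMono fun i => X i) : PosGaps (p - 1) (gaps X) := fun k hk => by
  have h := hX (show (⟨k, by omega⟩ : Fin p) < ⟨k + 1, by omega⟩ from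
    Fin.mk_lt_mk.mpr k.lt_succ_self)
  simpa [gaps, coord, show k < p by omega, show k + 1 < p by omega] using h

lemma sum_range_eq_sum_range_sub_one {f : ℕ → ℝ} (hf : f (p - 1) = 0) :
    ∑ i ∈ range p, f i = ∑ i ∈ range (p - 1), f i := by
  refine (sum_subset (range_subset_range.mpr (Nat.sub_le p 1)) fun i hi hi' => ?_).symm
  rw [show i = p - 1 by simp at hi hi'; omega, hf]

lemma gapSum_eq_gapEnergy (m : ℝ) (X : EuclideanSpace ℝ (Fin p)) :
    gapSum m p X = gapEnergy (1 - m) (p - 1) (gaps X) := by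
  have hterm : ∀ i : Fin p,
      (if h : (i : ℕ) + 1 < p then (X ⟨(i : ℕ) + 1, h⟩ - X i) ^ (1 - m) else 0)
        = if (i : ℕ) + 1 < p then gaps X i ^ (1 - m) else 0 := fun i => by
    split_ifs with h <;> simp [gaps, coord, h]
  rw [gapSum, sum_congr rfl fun i _ => hterm i,
    Fin.sum_univ_eq_sum_range (fun i => if i + 1 < p then gaps X i ^ (1 - m) else 0),
    sum_range_eq_sum_range_sub_one (if_neg (by omega)), gapEnergy]
  exact sum_congr rfl fun k hk => if_pos (by simp at hk; omega)

lemma pairSum_eq_pairEnergy (m : ℝ) (hX : StrictMono fun i => X i) :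
    pairSum m p X = pairEnergy (1 - m) (p - 1) (gaps X) := by
  set f : ℕ → ℕ → ℝ := fun i j => if i < j then (coord X j - coord X i) ^ (1 - m) else 0
  have hsymm : pairSum m p X = 2 * ∑ i : Fin p, ∑ j : Fin p, f i j := by
    have hsplit : ∀ i j : Fin p, (if i ≠ j then |X i - X j| ^ (1 - m) else 0) = f i j + f j i := by
      intro i j
      rcases lt_trichotomy i j with hij | rfl | hij
      · have h : X i < X j := hX hij
        simp [f, hij, hij.ne, hij.not_gt, abs_of_neg (sub_neg.mpr h)]
      · simp [f]
      · have h : X j < X i := hX hij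
        simp [f, hij, hij.ne', hij.not_gt, abs_of_pos (sub_pos.mpr h)]
    simp only [pairSum, hsplit, sum_add_distrib]
    rw [sum_comm (f := fun i j : Fin p => f j i)]
    ring
  have hrow : ∀ i, ∑ j ∈ range p, f i j = ∑ j ∈ Ico i (p - 1), blockSum (gaps X) i j ^ (1 - m) := by
    intro i
    rw [← sum_filter, show (range p).filter (fun j => i < j) = Ico (i + 1) (p - 1 + 1) by
      ext j; simp; omega, ← sum_Ico_add']
    refine sum_congr rfl fun j hj => ?_
    rw [coord_sub_coord X (by simp at hj; omega), blockSum, ← Ico_add_one_right_eq_Icc]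
  rw [hsymm, Fin.sum_univ_eq_sum_range (fun i => ∑ j : Fin p, f i j),
    sum_congr rfl fun i _ => Fin.sum_univ_eq_sum_range (f i) p, sum_congr rfl fun i _ => hrow i,
    sum_range_eq_sum_range_sub_one (by simp), pairEnergy]

lemma ofGaps_memR (hg : PosGaps (p - 1) g) : memR p (ofGaps p g) := by
  refine ⟨fun i j hij => ?_, ?_⟩
  · have hsum : ∑ k ∈ range i, g k < ∑ k ∈ range j, g k := by
      rw [← sum_range_add_sum_Ico _ hij.le, lt_add_iff_pos_right]
      exact sum_pos (fun k hk => hg k (by simp at hk; omega)) ⟨i, by simpa using hij⟩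
    simpa [ofGaps] using hsum
  · rcases p.eq_zero_or_pos with rfl | hp
    · simp
    · simp only [ofGaps, PiLp.toLp_apply, sum_sub_distrib, sum_const, card_univ, Fintype.card_fin,
        nsmul_eq_mul, Fin.sum_univ_eq_sum_range (fun i => ∑ k ∈ range i, g k) p]
      field_simp
      ring

lemma gaps_ofGaps (g : ℕ → ℝ) {k : ℕ} (hk : k < p - 1) : gaps (ofGaps p g) k = g k := by
  simp [gaps, coord, ofGaps, show k < p by omega, show k + 1 < p by omega, sum_range_succ]

lemma eq_smul_of_gaps_eq {V W : EuclideanSpace ℝ (Fin p)} (hV : ∑ i, V i = 0) (hW : ∑ i, W i = 0)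
    {c : ℝ} (h : ∀ k < p - 1, gaps W k = c * gaps V k) : W = c • V := by
  rcases p.eq_zero_or_pos with rfl | hp
  · exact Subsingleton.elim _ _
  set i₀ : Fin p := ⟨0, hp⟩
  have hconst : ∀ i : Fin p, W i - c * V i = W i₀ - c * V i₀ := fun i => by
    have hW' := coord_sub_coord W (Nat.zero_le i)
    have hV' := coord_sub_coord V (Nat.zero_le i)
    rw [sum_congr rfl fun k hk => h k (by simp at hk; omega), ← mul_sum, ← hV'] at hW'
    simp only [coord_fin] at hW'
    have : coord W 0 = W i₀ ∧ coord V 0 = V i₀ := ⟨dif_pos hp, dif_pos hp⟩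
    rw [this.1, this.2] at hW'
    linarith
  have hzero : W i₀ - c * V i₀ = 0 := by
    have := sum_congr rfl fun i (_ : i ∈ univ) => hconst i
    rw [sum_sub_distrib, ← mul_sum, hV, hW, sum_const, card_univ, Fintype.card_fin] at this
    simpa [hp.ne'] using this.symm
  ext i
  simp only [PiLp.smul_apply, smul_eq_mul]
  linarith [hconst i]

end Configurations

section FreeEnergy
variable {m : ℝ} {p : ℕ} {X : EuclideanSpace ℝ (Fin p)}

lemma Cp_eq_inv_maxRatio (m : ℝ) (p : ℕ) : Cp m p = (maxRatio (1 - m) (p - 1))⁻¹ := by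
  rw [Cp, maxRatio]
  congr 2
  ext r
  constructor
  · rintro ⟨X, hX, rfl⟩
    exact ⟨gaps X, gaps_pos hX.1, by
      rw [pairSum_eq_pairEnergy m hX.1, gapSum_eq_gapEnergy, energyRatio]⟩
  · rintro ⟨g, hg, rfl⟩
    refine ⟨ofGaps p g, ofGaps_memR hg, ?_⟩
    rw [pairSum_eq_pairEnergy m (ofGaps_memR hg).1, gapSum_eq_gapEnergy, ← energyRatio,
      energyRatio_congr fun k hk => gaps_ofGaps g hk]

lemma FF_Cp_eq (hp : 2 ≤ p) (hX : memR p X) :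
    FF m (Cp m p) p X = (m - 1)⁻¹ * gapEnergy (1 - m) (p - 1) (gaps X)
      * (1 - energyRatio (1 - m) (p - 1) (gaps X) / maxRatio (1 - m) (p - 1)) := by
  have hD := gapEnergy_pos (a := 1 - m) (by omega) (gaps_pos hX.1)
  rw [FF, Cp_eq_inv_maxRatio, gapSum_eq_gapEnergy, pairSum_eq_pairEnergy m hX.1, energyRatio]
  field_simp

lemma FF_Cp_nonneg (hm : 1 < m) (hp : 2 ≤ p) (hX : memR p X) : 0 ≤ FF m (Cp m p) p X := by
  have ha : 1 - m ≤ 0 := by linarith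
  rw [FF_Cp_eq hp hX]
  refine mul_nonneg (mul_nonneg (inv_nonneg.mpr (by linarith))
    (gapEnergy_pos (by omega) (gaps_pos hX.1)).le) (sub_nonneg.mpr ?_)
  exact div_le_one_of_le₀ (energyRatio_le_maxRatio ha (by omega) (gaps_pos hX.1))
    (maxRatio_pos ha (by omega)).le

lemma FF_Cp_eq_zero_iff (hm : 1 < m) (hp : 2 ≤ p) (hX : memR p X) :
    FF m (Cp m p) p X = 0 ↔ energyRatio (1 - m) (p - 1) (gaps X) = maxRatio (1 - m) (p - 1) := by
  have hD := gapEnergy_pos (a := 1 - m) (by omega) (gaps_pos hX.1)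
  have hs := maxRatio_pos (a := 1 - m) (by linarith) (by omega : 0 < p - 1)
  have hm' : (m - 1)⁻¹ ≠ 0 := inv_ne_zero (by linarith)
  rw [FF_Cp_eq hp hX, mul_eq_zero, or_iff_right (mul_ne_zero hm' hD.ne'), sub_eq_zero,
    eq_div_iff hs.ne', one_mul, eq_comm]

end FreeEnergy
end DiscreteHLS

open DiscreteHLS in
theorem stmt8_general (m χ : ℝ) (hm : 1 < m) (p : ℕ) (hp : 2 ≤ p) (hc : χ = Cp m p) :
    (∀ X : EuclideanSpace ℝ (Fin p), memR p X → 0 ≤ FF m χ p X) ∧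
    (∃ V : EuclideanSpace ℝ (Fin p), memR p V ∧ FF m χ p V = 0 ∧
      ∀ X : EuclideanSpace ℝ (Fin p), memR p X → FF m χ p V ≤ FF m χ p X) ∧
    (∀ V W : EuclideanSpace ℝ (Fin p),
      memR p V → (∀ X : EuclideanSpace ℝ (Fin p), memR p X → FF m χ p V ≤ FF m χ p X) →
      memR p W → (∀ X : EuclideanSpace ℝ (Fin p), memR p X → FF m χ p W ≤ FF m χ p X) →
      ∃ lam : ℝ, 0 < lam ∧ W = lam • V) := by
  subst hc
  have ha : 1 - m < 0 := by linarith
  have hq : 0 < p - 1 := by omega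
  obtain ⟨g, hg, hgmax⟩ := exists_energyRatio_eq_maxRatio ha hq
  have hV₀ := ofGaps_memR hg
  have hFV₀ : FF m (Cp m p) p (ofGaps p g) = 0 := (FF_Cp_eq_zero_iff hm hp hV₀).mpr <| by
    rwa [energyRatio_congr fun k hk => gaps_ofGaps g hk]
  have hmax : ∀ U, memR p U → (∀ X, memR p X → FF m (Cp m p) p U ≤ FF m (Cp m p) p X) →
      energyRatio (1 - m) (p - 1) (gaps U) = maxRatio (1 - m) (p - 1) := fun U hU hUmin =>
    (FF_Cp_eq_zero_iff hm hp hU).mp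
      (le_antisymm (hFV₀ ▸ hUmin _ hV₀) (FF_Cp_nonneg hm hp hU))
  refine ⟨fun X hX => FF_Cp_nonneg hm hp hX,
    ⟨ofGaps p g, hV₀, hFV₀, fun X hX => hFV₀ ▸ FF_Cp_nonneg hm hp hX⟩, ?_⟩
  intro V W hV hVmin hW hWmin
  obtain ⟨c, hc, hcg⟩ := exists_eq_const_mul_of_energyRatio_eq_maxRatio ha hq
    (gaps_pos hV.1) (hmax V hV hVmin) (gaps_pos hW.1) (hmax W hW hWmin)
  exact ⟨c, hc, eq_smul_of_gaps_eq hV.2 hW.2 hcg⟩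

theorem stmt8 (m χ : ℝ) (hm : 1 < m) (hχ : 0 < χ) (p : ℕ) (hp : 2 ≤ p) (hc : χ = Cp m p) :
    (∀ X : EuclideanSpace ℝ (Fin p), memR p X → 0 ≤ FF m χ p X) ∧
    (∃ V : EuclideanSpace ℝ (Fin p), memR p V ∧ FF m χ p V = 0 ∧
      ∀ X : EuclideanSpace ℝ (Fin p), memR p X → FF m χ p V ≤ FF m χ p X) ∧
    (∀ V W : EuclideanSpace ℝ (Fin p),
      memR p V → (∀ X : EuclideanSpace ℝ (Fin p), memR p X → FF m χ p V ≤ FF m χ p X) →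
      memR p W → (∀ X : EuclideanSpace ℝ (Fin p), memR p X → FF m χ p W ≤ FF m χ p X) →
      ∃ lam : ℝ, 0 < lam ∧ W = lam • V) :=
  stmt8_general m χ hm p hp hc
end
end

section
/- Let m > 1, a > 0, b > 0, q a positive integer, w ∈ (0,∞)^q, and let (λ_k)_{1≤k≤q} be positive reals with Σ_{k=1}^q λ_k = 1. Then (a + 2b) Σ_{k=1}^q λ_k (w_k)^{1−m} − a (Σ_{k=1}^q λ_k w_k)^{1−m} + b(m−1) (Σ_{k=1}^q λ_k w_k)² ≥ b(m+1), and equality holds if and only if w_k = 1 for all k. -/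
open scoped BigOperators
noncomputable section

/-! Write `p = 1 - m < 0`, `W = ∑ λₖ wₖ` and `S = ∑ λₖ wₖ ^ p`. Jensen's inequality for the
strictly convex function `x ↦ x ^ p` gives `W ^ p ≤ S`, with equality only when all `wₖ` equal
`W`; the tangent line of `x ^ p` at `1` gives
`2 W ^ p + (m - 1) W ^ 2 ≥ m + 1 + (m - 1) (W - 1) ^ 2`.
Hence the left-hand side exceeds `b (m + 1)` by at least
`(a + 2b) (S - W ^ p) + b (m - 1) (W - 1) ^ 2`, and both terms vanish only when `W = 1` and all
`wₖ = W`. -/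

open Set

namespace Real

lemma strictConvexOn_rpow_of_neg {p : ℝ} (hp : p < 0) :
    StrictConvexOn ℝ (Ioi 0) fun x : ℝ => x ^ p := by
  refine strictConvexOn_of_deriv2_pos' (convex_Ioi 0)
    (fun x hx => (continuousAt_rpow_const x p (.inl (ne_of_gt hx))).continuousWithinAt) ?_
  intro x hx
  have hderiv : deriv (fun y : ℝ => y ^ p) = fun y => p * y ^ (p - 1) :=
    funext fun y => deriv_rpow_const y p
  simp only [Function.iterate_succ, Function.iterate_zero, Function.comp_apply, id, hderiv]
  rw [deriv_const_mul _ (differentiableAt_rpow_const_of_ne _ (ne_of_gt hx)),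
    deriv_rpow_const, ← mul_assoc]
  have : 0 < x ^ (p - 1 - 1) := rpow_pos_of_pos hx _
  have : 0 < p * (p - 1) := mul_pos_of_neg_of_neg hp (by linarith)
  positivity

lemma one_add_mul_sub_one_le_rpow_of_neg {p x : ℝ} (hp : p < 0) (hx : 0 < x) :
    1 + p * (x - 1) ≤ x ^ p := by
  have hp1 : 0 < 1 - p := by linarith
  -- weighted AM-GM for `x ^ p` and `x` with weights proportional to `1` and `-p`
  have h := geom_mean_le_arith_mean2_weighted (w₁ := 1 / (1 - p)) (w₂ := -p / (1 - p))
    (p₁ := x ^ p) (p₂ := x) (by positivity) (div_nonneg (by linarith) hp1.le) (by positivity)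
    hx.le (by field_simp; ring)
  rw [← rpow_mul hx.le, ← rpow_add hx, show p * (1 / (1 - p)) + -p / (1 - p) = 0 by ring,
    rpow_zero] at h
  field_simp at h
  linarith

section Jensen

variable {ι : Type*} {s : Finset ι} {lam w : ι → ℝ} {p : ℝ}

lemma rpow_sum_mul_le_sum_mul_rpow_of_neg (hp : p < 0) (hlam : ∀ i ∈ s, 0 ≤ lam i)
    (hsum : ∑ i ∈ s, lam i = 1) (hw : ∀ i ∈ s, 0 < w i) :
    (∑ i ∈ s, lam i * w i) ^ p ≤ ∑ i ∈ s, lam i * w i ^ p := by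
  simpa only [smul_eq_mul] using (strictConvexOn_rpow_of_neg hp).convexOn.map_sum_le hlam hsum hw

lemma rpow_sum_mul_eq_sum_mul_rpow_iff_of_neg (hp : p < 0) (hlam : ∀ i ∈ s, 0 < lam i)
    (hsum : ∑ i ∈ s, lam i = 1) (hw : ∀ i ∈ s, 0 < w i) :
    (∑ i ∈ s, lam i * w i) ^ p = ∑ i ∈ s, lam i * w i ^ p ↔
      ∀ j ∈ s, w j = ∑ i ∈ s, lam i * w i := by
  simpa only [smul_eq_mul] using (strictConvexOn_rpow_of_neg hp).map_sum_eq_iff hlam hsum hw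

end Jensen

end Real

lemma add_one_add_mul_sq_le_two_mul_rpow_add_mul_sq {m W : ℝ} (hm : 1 < m) (hW : 0 < W) :
    m + 1 + (m - 1) * (W - 1) ^ 2 ≤ 2 * W ^ (1 - m) + (m - 1) * W ^ 2 := by
  have := Real.one_add_mul_sub_one_le_rpow_of_neg (by linarith : 1 - m < 0) hW
  nlinarith

theorem stmt9_general (m : ℝ) (hm : 1 < m) (a b : ℝ) (ha : 0 < a) (hb : 0 < b)
    (q : ℕ) (w lam : Fin q → ℝ) (hw : ∀ k, 0 < w k)
    (hlam : ∀ k, 0 < lam k) (hsum : ∑ k, lam k = 1) :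
    b * (m + 1) ≤ (a + 2 * b) * (∑ k, lam k * (w k) ^ (1 - m))
      - a * (∑ k, lam k * w k) ^ (1 - m) + b * (m - 1) * (∑ k, lam k * w k) ^ 2 ∧
    ((a + 2 * b) * (∑ k, lam k * (w k) ^ (1 - m))
      - a * (∑ k, lam k * w k) ^ (1 - m) + b * (m - 1) * (∑ k, lam k * w k) ^ 2 = b * (m + 1)
      ↔ ∀ k, w k = 1) := by
  have hp : 1 - m < 0 := by linarith
  set W := ∑ k, lam k * w k
  set S := ∑ k, lam k * w k ^ (1 - m)
  have hW : 0 < W := Finset.sum_pos (fun k _ => mul_pos (hlam k) (hw k))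
    (Finset.nonempty_of_sum_ne_zero (hsum ▸ one_ne_zero))
  have hJensen : W ^ (1 - m) ≤ S := Real.rpow_sum_mul_le_sum_mul_rpow_of_neg hp
    (fun k _ => (hlam k).le) hsum (fun k _ => hw k)
  have hExcess : b * (m + 1) + (a + 2 * b) * (S - W ^ (1 - m)) + b * (m - 1) * (W - 1) ^ 2 ≤
      (a + 2 * b) * S - a * W ^ (1 - m) + b * (m - 1) * W ^ 2 := by
    linarith [mul_le_mul_of_nonneg_left
      (add_one_add_mul_sq_le_two_mul_rpow_add_mul_sq hm hW) hb.le]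
  have hJensenGap : 0 ≤ (a + 2 * b) * (S - W ^ (1 - m)) :=
    mul_nonneg (by linarith) (sub_nonneg.2 hJensen)
  have hSqGap : 0 ≤ b * (m - 1) * (W - 1) ^ 2 :=
    mul_nonneg (mul_nonneg hb.le (by linarith)) (sq_nonneg _)
  refine ⟨by linarith, fun hE => ?_, fun hone => ?_⟩
  · have hW1 : W = 1 := by
      have : b * (m - 1) * (W - 1) ^ 2 = 0 := by linarith
      have : W - 1 = 0 := by simpa [hb.ne', (by linarith : m - 1 ≠ 0)] using this
      linarith
    have hSW : W ^ (1 - m) = S := by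
      have : (a + 2 * b) * (S - W ^ (1 - m)) = 0 := by linarith
      have : S - W ^ (1 - m) = 0 := by simpa [(by linarith : a + 2 * b ≠ 0)] using this
      linarith
    intro k
    rw [← hW1]
    exact (Real.rpow_sum_mul_eq_sum_mul_rpow_iff_of_neg hp (fun k _ => hlam k) hsum
      (fun k _ => hw k)).1 hSW k (Finset.mem_univ k)
  · simp only [W, S, hone, mul_one, Real.one_rpow, hsum]
    ring

theorem stmt9 (m : ℝ) (hm : 1 < m) (a b : ℝ) (ha : 0 < a) (hb : 0 < b)
    (q : ℕ) (hq : 1 ≤ q) (w lam : Fin q → ℝ) (hw : ∀ k, 0 < w k)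
    (hlam : ∀ k, 0 < lam k) (hsum : ∑ k, lam k = 1) :
    b * (m + 1) ≤ (a + 2 * b) * (∑ k, lam k * (w k) ^ (1 - m))
      - a * (∑ k, lam k * w k) ^ (1 - m) + b * (m - 1) * (∑ k, lam k * w k) ^ 2 ∧
    ((a + 2 * b) * (∑ k, lam k * (w k) ^ (1 - m))
      - a * (∑ k, lam k * w k) ^ (1 - m) + b * (m - 1) * (∑ k, lam k * w k) ^ 2 = b * (m + 1)
      ↔ ∀ k, w k = 1) :=
  stmt9_general m hm a b ha hb q w lam hw hlam hsum
end
end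

section
/- Let X : [0,T) → ℝ^N be a solution of the gradient flow of F^N_m and set f(t) = (1/(m+1))|X(t)|^{m+1} (note X(t) ≠ 0 since X(t) ∈ R^N and N ≥ 2). Then f is twice differentiable on [0,T) with f′(t) = (m−1) F^N_m(X(t)) |X(t)|^{m−1} and f″(t) = −((m−1)/(m+1)) f(t)^{−1} H^N_{m+1}(X(t)/|X(t)|); in particular f″(t) ≤ 0, so f is concave on [0,T). -/
/-!
F is homogeneous of degree 1 - m on the open cone, so Euler's identity ⟪∇F(X), X⟫ = (1 - m) F(X)
turns the flow into d/dt |X|² = 2 (m - 1) F(X), while d/dt F(X) = -|∇F(X)|². Differentiating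
f' = (m - 1) F(X) |X|^(m-1) once more gives -(m - 1) |X|^(m-3) (|X|² |∇F(X)|² - (m - 1)² F(X)²);
since ∇F is homogeneous of degree -m this is the stated multiple of H at X/|X|, and H ≥ 0 on the
unit sphere is Cauchy–Schwarz applied to Euler's identity.
-/

open scoped BigOperators
noncomputable section

open scoped RealInnerProductSpace Topology

section Homogeneous

variable {E : Type*} [NormedAddCommGroup E] [NormedSpace ℝ E] {f : E → ℝ} {y : E} {p : ℝ}

theorem fderiv_apply_self_of_homogeneous (hf : DifferentiableAt ℝ f y)
    (hhom : ∀ᶠ c in 𝓝 (1 : ℝ), f (c • y) = c ^ p * f y) :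
    fderiv ℝ f y y = p * f y := by
  have hray : HasDerivAt (fun c : ℝ => f (c • y)) (fderiv ℝ f y y) 1 := by
    have hsmul : HasDerivAt (fun c : ℝ => c • y) y 1 := by
      simpa using (hasDerivAt_id (1 : ℝ)).smul_const y
    have hf1 : HasFDerivAt f (fderiv ℝ f y) ((1 : ℝ) • y) := by
      rw [one_smul]; exact hf.hasFDerivAt
    exact hf1.comp_hasDerivAt 1 hsmul
  have hpow : HasDerivAt (fun c : ℝ => c ^ p * f y) (p * f y) 1 := by
    simpa using
      (Real.hasDerivAt_rpow_const (x := 1) (p := p) (Or.inl one_ne_zero)).mul_const (f y)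
  exact hray.unique (hpow.congr_of_eventuallyEq hhom)

theorem fderiv_smul_of_homogeneous {c : ℝ} (hc : 0 < c) (hf : DifferentiableAt ℝ f y)
    (hfc : DifferentiableAt ℝ f (c • y)) (hhom : ∀ᶠ z in 𝓝 y, f (c • z) = c ^ p * f z) :
    fderiv ℝ f (c • y) = c ^ (p - 1) • fderiv ℝ f y := by
  have hcomp : HasFDerivAt (fun z => f (c • z)) (c • fderiv ℝ f (c • y)) y := by
    refine (hfc.hasFDerivAt.comp y ((hasFDerivAt_id y).const_smul c)).congr_fderiv ?_
    ext v
    simp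
  have hscaled : HasFDerivAt (fun z => f (c • z)) (c ^ p • fderiv ℝ f y) y :=
    (hf.hasFDerivAt.const_mul _).congr_of_eventuallyEq hhom
  rw [Real.rpow_sub_one hc.ne', div_eq_inv_mul, mul_smul, ← hcomp.unique hscaled,
    inv_smul_smul₀ hc.ne']

end Homogeneous

theorem gradient_smul_of_homogeneous {E : Type*} [NormedAddCommGroup E] [InnerProductSpace ℝ E]
    [CompleteSpace E] {f : E → ℝ} {y : E} {p c : ℝ} (hc : 0 < c) (hf : DifferentiableAt ℝ f y)
    (hfc : DifferentiableAt ℝ f (c • y)) (hhom : ∀ᶠ z in 𝓝 y, f (c • z) = c ^ p * f z) :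
    gradient f (c • y) = c ^ (p - 1) • gradient f y := by
  simp [gradient, fderiv_smul_of_homogeneous hc hf hfc hhom]

theorem HasDerivWithinAt.norm_rpow {E : Type*} [NormedAddCommGroup E] [InnerProductSpace ℝ E]
    {f : ℝ → E} {f' : E} {s : Set ℝ} {t : ℝ} (hf : HasDerivWithinAt f f' s t) (h0 : f t ≠ 0)
    (p : ℝ) :
    HasDerivWithinAt (fun s => ‖f s‖ ^ p) (p * ‖f t‖ ^ (p - 2) * ⟪f t, f'⟫) s t := by
  have hsq (x q : ℝ) (hx : 0 ≤ x) : (x ^ 2) ^ (q / 2) = x ^ q := by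
    rw [← Real.rpow_natCast, ← Real.rpow_mul hx]; congr 1; push_cast; ring
  have h := hf.norm_sq.rpow_const (p := p / 2) (Or.inl (by positivity))
  rw [show p / 2 - 1 = (p - 2) / 2 by ring] at h
  simp only [hsq _ _ (norm_nonneg _)] at h
  exact h.congr_deriv (by ring)

theorem concaveOn_Ico_of_hasDerivWithinAt2_nonpos {a b : ℝ} {f f' f'' : ℝ → ℝ}
    (hf : ∀ x ∈ Set.Ico a b, HasDerivWithinAt f (f' x) (Set.Ico a b) x)
    (hf' : ∀ x ∈ Set.Ico a b, HasDerivWithinAt f' (f'' x) (Set.Ico a b) x)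
    (hf'' : ∀ x ∈ Set.Ico a b, f'' x ≤ 0) : ConcaveOn ℝ (Set.Ico a b) f := by
  refine concaveOn_of_hasDerivWithinAt2_nonpos (f' := f') (f'' := f'') (convex_Ico a b)
    (fun x hx => (hf x hx).continuousWithinAt) ?_ ?_ ?_ <;> rw [interior_Ico]
  · exact fun x hx => (hf x (Set.Ioo_subset_Ico_self hx)).mono Set.Ioo_subset_Ico_self
  · exact fun x hx => (hf' x (Set.Ioo_subset_Ico_self hx)).mono Set.Ioo_subset_Ico_self
  · exact fun x hx => hf'' x (Set.Ioo_subset_Ico_self hx)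

section FreeEnergy

variable {N : ℕ} {m χ : ℝ}

theorem isOpen_setOf_strictMono :
    IsOpen {Z : EuclideanSpace ℝ (Fin N) | StrictMono fun i => Z i} := by
  simp only [StrictMono, Set.ofPred_forall]
  exact isOpen_iInter_of_finite fun i => isOpen_iInter_of_finite fun j =>
    isOpen_iInter_of_finite fun _ =>
      isOpen_lt (EuclideanSpace.proj i).continuous (EuclideanSpace.proj j).continuous

theorem differentiableAt_FF {Y : EuclideanSpace ℝ (Fin N)} (hY : StrictMono fun i => Y i) :
    DifferentiableAt ℝ (FF m χ N) Y := by
  have hcoord (i : Fin N) : DifferentiableAt ℝ (fun Z : EuclideanSpace ℝ (Fin N) => Z i) Y :=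
    (EuclideanSpace.proj (𝕜 := ℝ) i).differentiableAt (x := Y)
  have hgap : DifferentiableAt ℝ (gapSum m N) Y := by
    refine DifferentiableAt.fun_sum fun i _ => ?_
    split_ifs with h
    · exact ((hcoord _).sub (hcoord i)).rpow_const
        (Or.inl (sub_ne_zero.2 (hY (Fin.lt_def.2 (Nat.lt_succ_self _))).ne'))
    · exact differentiableAt_const 0
  have hpair : DifferentiableAt ℝ (pairSum m N) Y := by
    refine DifferentiableAt.fun_sum fun i _ => DifferentiableAt.fun_sum fun j _ => ?_
    split_ifs with h
    · have hne : Y i - Y j ≠ 0 := sub_ne_zero.2 fun hij => h (hY.injective hij)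
      exact (((hcoord i).sub (hcoord j)).abs hne).rpow_const (Or.inl (abs_ne_zero.2 hne))
    · exact differentiableAt_const 0
  exact (hgap.const_mul _).sub (hpair.const_mul _)

theorem gapSum_smul_s13 {c : ℝ} (hc : 0 < c) {Y : EuclideanSpace ℝ (Fin N)}
    (hY : StrictMono fun i => Y i) :
    gapSum m N (c • Y) = c ^ (1 - m) * gapSum m N Y := by
  rw [gapSum, gapSum, Finset.mul_sum]
  refine Finset.sum_congr rfl fun i _ => ?_
  split_ifs with h
  · have hlt : Y i < Y ⟨i + 1, h⟩ := hY (Fin.lt_def.2 (Nat.lt_succ_self _))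
    simp only [PiLp.smul_apply, smul_eq_mul, ← mul_sub]
    exact Real.mul_rpow hc.le (sub_nonneg.2 hlt.le)
  · rw [mul_zero]

theorem pairSum_smul_s13 {c : ℝ} (hc : 0 < c) (Y : EuclideanSpace ℝ (Fin N)) :
    pairSum m N (c • Y) = c ^ (1 - m) * pairSum m N Y := by
  simp only [pairSum, Finset.mul_sum, PiLp.smul_apply, smul_eq_mul, ← mul_sub, abs_mul,
    abs_of_pos hc, mul_ite, mul_zero, Real.mul_rpow hc.le (abs_nonneg _)]

theorem FF_smul_s13 {c : ℝ} (hc : 0 < c) {Y : EuclideanSpace ℝ (Fin N)}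
    (hY : StrictMono fun i => Y i) :
    FF m χ N (c • Y) = c ^ (1 - m) * FF m χ N Y := by
  rw [FF, FF, gapSum_smul_s13 hc hY, pairSum_smul_s13 hc Y]
  ring

theorem FF_smul_eventuallyEq {c : ℝ} (hc : 0 < c) {Y : EuclideanSpace ℝ (Fin N)}
    (hY : StrictMono fun i => Y i) :
    ∀ᶠ Z in 𝓝 Y, FF m χ N (c • Z) = c ^ (1 - m) * FF m χ N Z :=
  Filter.eventually_of_mem (isOpen_setOf_strictMono.mem_nhds hY) fun _ hZ => FF_smul_s13 hc hZ

theorem inner_gradient_FF_self {Y : EuclideanSpace ℝ (Fin N)} (hY : StrictMono fun i => Y i) :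
    ⟪gradient (FF m χ N) Y, Y⟫ = (1 - m) * FF m χ N Y := by
  rw [inner_gradient_left]
  refine fderiv_apply_self_of_homogeneous (differentiableAt_FF hY) ?_
  filter_upwards [Ioi_mem_nhds one_pos] with c hc using FF_smul_s13 hc hY

theorem gradient_FF_smul {c : ℝ} (hc : 0 < c) {Y : EuclideanSpace ℝ (Fin N)}
    (hY : StrictMono fun i => Y i) :
    gradient (FF m χ N) (c • Y) = c ^ (-m) • gradient (FF m χ N) Y := by
  rw [gradient_smul_of_homogeneous hc (differentiableAt_FF hY)
    (differentiableAt_FF (hY.const_mul hc)) (FF_smul_eventuallyEq hc hY), sub_sub_cancel_left]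

theorem Hfun_nonneg {Y : EuclideanSpace ℝ (Fin N)} (hY : StrictMono fun i => Y i)
    (hY1 : ‖Y‖ = 1) : 0 ≤ Hfun m χ N Y := by
  have hCS : ((m - 1) * FF m χ N Y) ^ 2 ≤ ‖gradient (FF m χ N) Y‖ ^ 2 :=
    calc ((m - 1) * FF m χ N Y) ^ 2 = |⟪gradient (FF m χ N) Y, Y⟫| ^ 2 := by
          rw [sq_abs, inner_gradient_FF_self hY]; ring
      _ ≤ (‖gradient (FF m χ N) Y‖ * ‖Y‖) ^ 2 := by
          gcongr; exact abs_real_inner_le_norm _ _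
      _ = ‖gradient (FF m χ N) Y‖ ^ 2 := by rw [hY1, mul_one]
  exact sub_nonneg.2 hCS

theorem Hfun_inv_norm_smul {Y : EuclideanSpace ℝ (Fin N)} (hY : StrictMono fun i => Y i)
    (hY0 : Y ≠ 0) :
    Hfun m χ N (‖Y‖⁻¹ • Y) = (‖Y‖ ^ m) ^ 2 * ‖gradient (FF m χ N) Y‖ ^ 2
      - (‖Y‖ ^ (m - 1) * ((m - 1) * FF m χ N Y)) ^ 2 := by
  have hb : 0 < ‖Y‖ := norm_pos_iff.2 hY0
  have hbinv : 0 < ‖Y‖⁻¹ := inv_pos.2 hb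
  rw [Hfun, gradient_FF_smul hbinv hY, FF_smul_s13 hbinv hY, norm_smul, Real.norm_of_nonneg
    (by positivity), Real.inv_rpow hb.le, Real.inv_rpow hb.le, ← Real.rpow_neg hb.le,
    ← Real.rpow_neg hb.le, neg_neg, neg_sub]
  ring

end FreeEnergy

section GradientFlow

variable {N : ℕ} {m χ T : ℝ} {X : ℝ → EuclideanSpace ℝ (Fin N)} {t : ℝ}

theorem isGFlow.ne_zero (hN : 2 ≤ N) (hflow : isGFlow m χ N T X) (ht : t ∈ Set.Ico 0 T) :
    X t ≠ 0 := by
  intro h0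
  have h01 := (hflow t ht).1.1
    (show (⟨0, by omega⟩ : Fin N) < ⟨1, by omega⟩ from Fin.lt_def.2 one_pos)
  simp [h0] at h01

theorem isGFlow.hasDerivWithinAt_FF (hflow : isGFlow m χ N T X) (ht : t ∈ Set.Ico 0 T) :
    HasDerivWithinAt (fun s => FF m χ N (X s)) (-‖gradient (FF m χ N) (X t)‖ ^ 2)
      (Set.Ico 0 T) t := by
  have h := (differentiableAt_FF (m := m) (χ := χ) (hflow t ht).1.1).hasFDerivAt
    |>.comp_hasDerivWithinAt t (hflow t ht).2
  rwa [← inner_gradient_left, inner_neg_right, real_inner_self_eq_norm_sq] at h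

theorem isGFlow.hasDerivWithinAt_norm_rpow (hN : 2 ≤ N) (hflow : isGFlow m χ N T X)
    (ht : t ∈ Set.Ico 0 T) (p : ℝ) :
    HasDerivWithinAt (fun s => ‖X s‖ ^ p) (p * ‖X t‖ ^ (p - 2) * ((m - 1) * FF m χ N (X t)))
      (Set.Ico 0 T) t := by
  have h := (hflow t ht).2.norm_rpow (hflow.ne_zero hN ht) p
  rwa [inner_neg_right, real_inner_comm, inner_gradient_FF_self (hflow t ht).1.1, ← neg_mul,
    neg_sub] at h

theorem isGFlow.hasDerivWithinAt_moment (hN : 2 ≤ N) (hm1 : m + 1 ≠ 0)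
    (hflow : isGFlow m χ N T X) (ht : t ∈ Set.Ico 0 T) :
    HasDerivWithinAt (fun s => (m + 1)⁻¹ * ‖X s‖ ^ (m + 1))
      ((m - 1) * FF m χ N (X t) * ‖X t‖ ^ (m - 1)) (Set.Ico 0 T) t := by
  refine ((hflow.hasDerivWithinAt_norm_rpow hN ht (m + 1)).const_mul (m + 1)⁻¹).congr_deriv ?_
  rw [show m + 1 - 2 = m - 1 by ring]
  field_simp

theorem isGFlow.hasDerivWithinAt_moment_deriv (hN : 2 ≤ N) (hm1 : m + 1 ≠ 0)
    (hflow : isGFlow m χ N T X) (ht : t ∈ Set.Ico 0 T) :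
    HasDerivWithinAt (fun s => (m - 1) * FF m χ N (X s) * ‖X s‖ ^ (m - 1))
      (-((m - 1) / (m + 1)) * ((m + 1)⁻¹ * ‖X t‖ ^ (m + 1))⁻¹ * Hfun m χ N (‖X t‖⁻¹ • X t))
      (Set.Ico 0 T) t := by
  have hX0 := hflow.ne_zero hN ht
  have hb : 0 < ‖X t‖ := norm_pos_iff.2 hX0
  refine (((hflow.hasDerivWithinAt_FF ht).const_mul (m - 1)).mul
    (hflow.hasDerivWithinAt_norm_rpow hN ht (m - 1))).congr_deriv ?_
  rw [Hfun_inv_norm_smul (hflow t ht).1.1 hX0, Real.rpow_sub hb (m - 1) 2, Real.rpow_two,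
    Real.rpow_add_one hb.ne', Real.rpow_sub_one hb.ne']
  field_simp
  ring

end GradientFlow

theorem stmt13_general (N : ℕ) (hN : 2 ≤ N) (m χ : ℝ) (hm : 1 < m)
    (T : ℝ) (X : ℝ → EuclideanSpace ℝ (Fin N))
    (hflow : isGFlow m χ N T X) :
    (∀ t ∈ Set.Ico (0 : ℝ) T,
      HasDerivWithinAt (fun s => (m + 1)⁻¹ * ‖X s‖ ^ (m + 1))
        ((m - 1) * FF m χ N (X t) * ‖X t‖ ^ (m - 1)) (Set.Ico (0 : ℝ) T) t) ∧
    (∀ t ∈ Set.Ico (0 : ℝ) T,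
      HasDerivWithinAt (fun s => (m - 1) * FF m χ N (X s) * ‖X s‖ ^ (m - 1))
        (-((m - 1) / (m + 1)) * ((m + 1)⁻¹ * ‖X t‖ ^ (m + 1))⁻¹ *
          Hfun m χ N (‖X t‖⁻¹ • X t)) (Set.Ico (0 : ℝ) T) t) ∧
    (∀ t ∈ Set.Ico (0 : ℝ) T,
      -((m - 1) / (m + 1)) * ((m + 1)⁻¹ * ‖X t‖ ^ (m + 1))⁻¹ *
        Hfun m χ N (‖X t‖⁻¹ • X t) ≤ 0) ∧
    ConcaveOn ℝ (Set.Ico (0 : ℝ) T) (fun s => (m + 1)⁻¹ * ‖X s‖ ^ (m + 1)) := by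
  have hm1 : m + 1 ≠ 0 := by linarith
  have hf' := fun t (ht : t ∈ Set.Ico (0 : ℝ) T) => hflow.hasDerivWithinAt_moment hN hm1 ht
  have hf'' := fun t (ht : t ∈ Set.Ico (0 : ℝ) T) =>
    hflow.hasDerivWithinAt_moment_deriv hN hm1 ht
  have hf''_nonpos : ∀ t ∈ Set.Ico (0 : ℝ) T,
      -((m - 1) / (m + 1)) * ((m + 1)⁻¹ * ‖X t‖ ^ (m + 1))⁻¹ *
        Hfun m χ N (‖X t‖⁻¹ • X t) ≤ 0 := fun t ht => by
    have hX0 := hflow.ne_zero hN ht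
    have hH : 0 ≤ Hfun m χ N (‖X t‖⁻¹ • X t) :=
      Hfun_nonneg ((hflow t ht).1.1.const_mul (inv_pos.2 (norm_pos_iff.2 hX0)))
        (norm_smul_inv_norm (𝕜 := ℝ) hX0)
    have hcoef : 0 ≤ (m - 1) / (m + 1) := div_nonneg (by linarith) (by linarith)
    simp only [neg_mul]
    exact neg_nonpos.2 (mul_nonneg (mul_nonneg hcoef (by positivity)) hH)
  exact ⟨hf', hf'', hf''_nonpos, concaveOn_Ico_of_hasDerivWithinAt2_nonpos hf' hf'' hf''_nonpos⟩

theorem stmt13 (N : ℕ) (hN : 2 ≤ N) (m χ : ℝ) (hm : 1 < m) (hχ : 0 < χ)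
    (T : ℝ) (hT : 0 < T) (X : ℝ → EuclideanSpace ℝ (Fin N))
    (hflow : isGFlow m χ N T X) :
    (∀ t ∈ Set.Ico (0 : ℝ) T,
      HasDerivWithinAt (fun s => (m + 1)⁻¹ * ‖X s‖ ^ (m + 1))
        ((m - 1) * FF m χ N (X t) * ‖X t‖ ^ (m - 1)) (Set.Ico (0 : ℝ) T) t) ∧
    (∀ t ∈ Set.Ico (0 : ℝ) T,
      HasDerivWithinAt (fun s => (m - 1) * FF m χ N (X s) * ‖X s‖ ^ (m - 1))
        (-((m - 1) / (m + 1)) * ((m + 1)⁻¹ * ‖X t‖ ^ (m + 1))⁻¹ *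
          Hfun m χ N (‖X t‖⁻¹ • X t)) (Set.Ico (0 : ℝ) T) t) ∧
    (∀ t ∈ Set.Ico (0 : ℝ) T,
      -((m - 1) / (m + 1)) * ((m + 1)⁻¹ * ‖X t‖ ^ (m + 1))⁻¹ *
        Hfun m χ N (‖X t‖⁻¹ • X t) ≤ 0) ∧
    ConcaveOn ℝ (Set.Ico (0 : ℝ) T) (fun s => (m + 1)⁻¹ * ‖X s‖ ^ (m + 1)) :=
  stmt13_general N hN m χ hm T X hflow
end
end
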